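/- arXiv:2304.08739 — 9 statements merged into one kernel-verified Lean document; each statement's English description precedes it below -/
import Mathlib

section
/- Assume (H1), (H2), (H3), fix ε, μ, α > 0, and let ũ be a positive C² solution of the logistic problem. If θ ≥ α F(max_{x∈[0,L]} ũ(x)), then the steady-state system admits no positive solution. -/
open Set Filter

section Aux

lemma deriv_zero_at_max (L : ℝ) (f : ℝ → ℝ)
    (h0 : derivWithin f (Icc 0 L) 0 = 0) (hLL : derivWithin f (Icc 0 L) L = 0)
    (x0 : ℝ) (hx0 : x0 ∈ Icc 0 L) (hmax : ∀ x ∈ Icc 0 L, f x ≤ f x0) :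
    derivWithin f (Icc 0 L) x0 = 0 := by
  rcases eq_or_lt_of_le hx0.1 with h|h
  · rw [← h]; exact h0
  rcases eq_or_lt_of_le hx0.2 with h'|h'
  · rw [h']; exact hLL
  have hnhds : Icc 0 L ∈ nhds x0 := Icc_mem_nhds h h'
  rw [derivWithin_of_mem_nhds hnhds]
  have hlm : IsLocalMax f x0 := Filter.eventually_of_mem hnhds hmax
  exact hlm.deriv_eq_zero

lemma second_deriv_nonpos_at_max (L : ℝ) (hL : 0 < L) (f : ℝ → ℝ)
    (hf : ContDiffOn ℝ 2 f (Icc 0 L))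
    (h0 : derivWithin f (Icc 0 L) 0 = 0) (hLL : derivWithin f (Icc 0 L) L = 0)
    (x0 : ℝ) (hx0 : x0 ∈ Icc 0 L) (hmax : ∀ x ∈ Icc 0 L, f x ≤ f x0) :
    derivWithin (derivWithin f (Icc 0 L)) (Icc 0 L) x0 ≤ 0 := by
  have hus : UniqueDiffOn ℝ (Icc (0:ℝ) L) := uniqueDiffOn_Icc hL
  set g := derivWithin f (Icc 0 L) with hg
  have hgc : ContDiffOn ℝ 1 g (Icc 0 L) := hf.derivWithin hus (by norm_num)
  have hgx0 : g x0 = 0 := deriv_zero_at_max L f h0 hLL x0 hx0 hmax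
  by_contra hcon
  push_neg at hcon
  have hgd : HasDerivWithinAt g (derivWithin g (Icc 0 L) x0) (Icc 0 L) x0 :=
    ((hgc.differentiableOn one_ne_zero) x0 hx0).hasDerivWithinAt
  have hslope := hasDerivWithinAt_iff_tendsto_slope.1 hgd
  have hev : ∀ᶠ t in nhdsWithin x0 (Icc 0 L \ {x0}), 0 < slope g x0 t :=
    hslope (Ioi_mem_nhds hcon)
  rw [eventually_nhdsWithin_iff] at hev
  rcases Metric.eventually_nhds_iff.1 hev with ⟨δ, hδ, hball⟩
  have hgt : ∀ t ∈ Icc (0:ℝ) L, t ≠ x0 → |t - x0| < δ → 0 < g t / (t - x0) := by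
    intro t ht htne hdist
    have := hball (show dist t x0 < δ by rwa [Real.dist_eq]) ⟨ht, htne⟩
    rwa [slope_def_field, hgx0, sub_zero] at this
  rcases lt_or_eq_of_le hx0.2 with hxL | hxL
  · -- x0 < L : f strictly increasing just to the right
    set y := min L (x0 + δ/2) with hy
    have hx0y : x0 < y := lt_min hxL (by linarith)
    have hyL : y ≤ L := min_le_left _ _
    have hyr : y ≤ x0 + δ/2 := min_le_right _ _
    have hy0 : 0 ≤ x0 := hx0.1
    have hsub : Icc x0 y ⊆ Icc 0 L := Icc_subset_Icc hy0 hyL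
    have hmono : StrictMonoOn f (Icc x0 y) := by
      apply strictMonoOn_of_deriv_pos (convex_Icc _ _) (hf.continuousOn.mono hsub)
      intro t ht
      rw [interior_Icc] at ht
      obtain ⟨ht1, ht2⟩ := ht
      have hts : Icc (0:ℝ) L ∈ nhds t :=
        Icc_mem_nhds (lt_of_le_of_lt hy0 ht1) (lt_of_lt_of_le ht2 hyL)
      have h2 : 0 < t - x0 := by linarith
      have h1 : 0 < g t / (t - x0) := hgt t (hsub ⟨le_of_lt ht1, le_of_lt ht2⟩)
          (ne_of_gt ht1) (by rw [abs_of_pos h2]; linarith)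
      have hgt' : 0 < g t := by
        by_contra hge
        push_neg at hge
        nlinarith [div_nonpos_of_nonpos_of_nonneg hge (le_of_lt h2)]
      rw [← derivWithin_of_mem_nhds hts]
      exact hgt'
    have := hmono (left_mem_Icc.2 (le_of_lt hx0y)) (right_mem_Icc.2 (le_of_lt hx0y)) hx0y
    exact absurd (hmax y (hsub (right_mem_Icc.2 (le_of_lt hx0y)))) (not_le.2 this)
  · -- x0 = L : f strictly decreasing just to the left
    have hx0pos : 0 < x0 := hxL ▸ hL
    set y := max 0 (x0 - δ/2) with hy
    have hx0y : y < x0 := max_lt hx0pos (by linarith)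
    have hy0 : 0 ≤ y := le_max_left _ _
    have hyr : x0 - δ/2 ≤ y := le_max_right _ _
    have hsub : Icc y x0 ⊆ Icc 0 L := Icc_subset_Icc hy0 hx0.2
    have hanti : StrictAntiOn f (Icc y x0) := by
      apply strictAntiOn_of_deriv_neg (convex_Icc _ _) (hf.continuousOn.mono hsub)
      intro t ht
      rw [interior_Icc] at ht
      obtain ⟨ht1, ht2⟩ := ht
      have hts : Icc (0:ℝ) L ∈ nhds t :=
        Icc_mem_nhds (lt_of_le_of_lt hy0 ht1) (lt_of_lt_of_le ht2 hx0.2)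
      have h2 : t - x0 < 0 := by linarith
      have h1 : 0 < g t / (t - x0) := hgt t (hsub ⟨le_of_lt ht1, le_of_lt ht2⟩)
          (ne_of_lt ht2) (by rw [abs_of_neg h2]; linarith)
      have hgt' : g t < 0 := by
        by_contra hge
        push_neg at hge
        nlinarith [div_nonpos_of_nonneg_of_nonpos hge (le_of_lt h2)]
      rw [← derivWithin_of_mem_nhds hts]
      exact hgt'
    have := hanti (left_mem_Icc.2 (le_of_lt hx0y)) (right_mem_Icc.2 (le_of_lt hx0y)) hx0y
    exact absurd (hmax y (hsub (left_mem_Icc.2 (le_of_lt hx0y)))) (not_le.2 this)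
end Aux


/-- `(u, w)` is a positive solution of the steady-state predator-prey system
`ε u'' + u(m - u) - (F(u)/d(u)) w = 0`, `μ w'' + ((α F(u) - θ)/d(u)) w = 0`
on `[0, L]` with Neumann boundary conditions. -/
def IsPosSol (L ε μ α θ : ℝ) (m F d : ℝ → ℝ) (u w : ℝ → ℝ) : Prop :=
  ContDiffOn ℝ 2 u (Set.Icc 0 L) ∧ ContDiffOn ℝ 2 w (Set.Icc 0 L) ∧
  (∀ x ∈ Set.Icc 0 L, 0 < u x) ∧ (∀ x ∈ Set.Icc 0 L, 0 < w x) ∧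
  (∀ x ∈ Set.Icc 0 L,
    ε * iteratedDerivWithin 2 u (Set.Icc 0 L) x
      + u x * (m x - u x) - F (u x) / d (u x) * w x = 0) ∧
  (∀ x ∈ Set.Icc 0 L,
    μ * iteratedDerivWithin 2 w (Set.Icc 0 L) x
      + (α * F (u x) - θ) / d (u x) * w x = 0) ∧
  derivWithin u (Set.Icc 0 L) 0 = 0 ∧ derivWithin u (Set.Icc 0 L) L = 0 ∧
  derivWithin w (Set.Icc 0 L) 0 = 0 ∧ derivWithin w (Set.Icc 0 L) L = 0

/-- `u` is a positive solution of the logistic problem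
`ε u'' + u(m(x) - u) = 0` on `[0, L]` with Neumann boundary conditions. -/
def IsLogistic (L ε : ℝ) (m : ℝ → ℝ) (u : ℝ → ℝ) : Prop :=
  ContDiffOn ℝ 2 u (Set.Icc 0 L) ∧ (∀ x ∈ Set.Icc 0 L, 0 < u x) ∧
  (∀ x ∈ Set.Icc 0 L,
    ε * iteratedDerivWithin 2 u (Set.Icc 0 L) x + u x * (m x - u x) = 0) ∧
  derivWithin u (Set.Icc 0 L) 0 = 0 ∧ derivWithin u (Set.Icc 0 L) L = 0

/-- under (H1), (H2), (H3), if `θ ≥ α F(max ũ)`, the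
steady-state system admits no positive solution. -/
theorem stmt_2 (L ε μ α θ : ℝ) (hL : 0 < L) (hε : 0 < ε) (hμ : 0 < μ) (hα : 0 < α)
    (m F d tu : ℝ → ℝ)
    -- (H1)
    (hm_cont : ContinuousOn m (Set.Icc 0 L))
    (hm_noncon : ∃ x ∈ Set.Icc 0 L, ∃ y ∈ Set.Icc 0 L, m x ≠ m y)
    (hm_int : 0 < ∫ x in (0:ℝ)..L, m x)
    -- (H2)
    (hF_smooth : ContDiffOn ℝ 1 F (Set.Ici 0)) (hF0 : F 0 = 0)
    (hF_deriv : ∀ s ∈ Set.Ici (0:ℝ), 0 < derivWithin F (Set.Ici 0) s)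
    -- (H3)
    (hd_smooth : ContDiffOn ℝ 2 d (Set.Ici 0))
    (hd_pos : ∀ s ∈ Set.Ici (0:ℝ), 0 < d s)
    (hd_deriv : ∀ s ∈ Set.Ici (0:ℝ), derivWithin d (Set.Ici 0) s ≤ 0)
    (hd_ne : ∃ s ∈ Set.Ici (0:ℝ), derivWithin d (Set.Ici 0) s ≠ 0)
    -- positive solution of the logistic problem
    (htu : IsLogistic L ε m tu)
    -- θ range
    (hθ0 : 0 ≤ θ) (hθ : α * F (sSup (tu '' Set.Icc 0 L)) ≤ θ) :
    ¬ ∃ u w, IsPosSol L ε μ α θ m F d u w := by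
  unfold IsLogistic at htu
  rintro ⟨u, w, hsol⟩
  unfold IsPosSol at hsol
  obtain ⟨hu2, hw2, hupos, hwpos, hueq, hweq, hu0, huL, hw0, hwL⟩ := hsol
  obtain ⟨htu2, htupos, htueq, htu0, htuL⟩ := htu
  have hus : UniqueDiffOn ℝ (Icc (0:ℝ) L) := uniqueDiffOn_Icc hL
  have hcomp : IsCompact (Icc (0:ℝ) L) := isCompact_Icc
  have hne : (Icc (0:ℝ) L).Nonempty := nonempty_Icc.2 (le_of_lt hL)
  -- max of tu
  obtain ⟨x3, hx3, hx3max⟩ := hcomp.exists_isMaxOn hne htu2.continuousOn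
  rw [isMaxOn_iff] at hx3max
  have hM : sSup (tu '' Icc 0 L) = tu x3 :=
    IsGreatest.csSup_eq ⟨⟨x3, hx3, rfl⟩, by rintro _ ⟨y, hy, rfl⟩; exact hx3max y hy⟩
  rw [hM] at hθ
  -- F strictly monotone on Ici 0
  have hFmono : StrictMonoOn F (Ici 0) := by
    apply strictMonoOn_of_deriv_pos (convex_Ici 0) hF_smooth.continuousOn
    intro t ht
    rw [interior_Ici] at ht
    rw [← derivWithin_of_mem_nhds (Ici_mem_nhds ht)]
    exact hF_deriv t (mem_Ici.2 (le_of_lt ht))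
  -- iterated deriv as double derivWithin
  have iter2 : ∀ (f : ℝ → ℝ), ∀ x ∈ Icc (0:ℝ) L,
      iteratedDerivWithin 2 f (Icc 0 L) x
        = derivWithin (derivWithin f (Icc 0 L)) (Icc 0 L) x := by
    intro f x hx
    rw [iteratedDerivWithin_succ]
    exact derivWithin_congr (fun y hy => congrFun iteratedDerivWithin_one y)
      (congrFun iteratedDerivWithin_one x)
  -- v = u / tu
  set v := fun x => u x / tu x with hv
  have htune : ∀ x ∈ Icc (0:ℝ) L, tu x ≠ 0 := fun x hx => ne_of_gt (htupos x hx)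
  have hv2 : ContDiffOn ℝ 2 v (Icc 0 L) := hu2.div htu2 htune
  have h0mem : (0:ℝ) ∈ Icc (0:ℝ) L := left_mem_Icc.2 (le_of_lt hL)
  have hLmem : L ∈ Icc (0:ℝ) L := right_mem_Icc.2 (le_of_lt hL)
  have hvbd : ∀ z ∈ Icc (0:ℝ) L, derivWithin v (Icc 0 L) z
      = (derivWithin u (Icc 0 L) z * tu z - u z * derivWithin tu (Icc 0 L) z) / tu z ^ 2 :=
    fun z hz => derivWithin_div (hu2.differentiableOn two_ne_zero z hz)
      (htu2.differentiableOn two_ne_zero z hz) (htune z hz)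
  have hv0 : derivWithin v (Icc 0 L) 0 = 0 := by
    rw [hvbd 0 h0mem, hu0, htu0]; ring
  have hvL : derivWithin v (Icc 0 L) L = 0 := by
    rw [hvbd L hLmem, huL, htuL]; ring
  -- max of v
  obtain ⟨x0, hx0, hvmax⟩ := hcomp.exists_isMaxOn hne hv2.continuousOn
  rw [isMaxOn_iff] at hvmax
  have hvd0 : derivWithin v (Icc 0 L) x0 = 0 :=
    deriv_zero_at_max L v hv0 hvL x0 hx0 hvmax
  have hvdd : derivWithin (derivWithin v (Icc 0 L)) (Icc 0 L) x0 ≤ 0 :=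
    second_deriv_nonpos_at_max L hL v hv2 hv0 hvL x0 hx0 hvmax
  -- u = v * tu on Icc
  have huv : EqOn u (fun x => v x * tu x) (Icc 0 L) := by
    intro x hx
    simp only [hv]
    rw [div_mul_cancel₀ _ (htune x hx)]
  have hvdiff := hv2.differentiableOn two_ne_zero
  have htudiff := htu2.differentiableOn two_ne_zero
  have hv1 : ContDiffOn ℝ 1 (derivWithin v (Icc 0 L)) (Icc 0 L) :=
    hv2.derivWithin hus (by norm_num)
  have htu1 : ContDiffOn ℝ 1 (derivWithin tu (Icc 0 L)) (Icc 0 L) :=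
    htu2.derivWithin hus (by norm_num)
  have hud : EqOn (derivWithin u (Icc 0 L))
      (fun x => derivWithin v (Icc 0 L) x * tu x + v x * derivWithin tu (Icc 0 L) x)
      (Icc 0 L) := by
    intro x hx
    have := derivWithin_fun_mul (𝕜 := ℝ) (c := v) (d := tu) (s := Icc 0 L) (x := x)
      (hvdiff x hx) (htudiff x hx)
    rw [derivWithin_congr huv (huv hx)]
    exact this
  -- second derivative of u at x0
  have hudd : derivWithin (derivWithin u (Icc 0 L)) (Icc 0 L) x0
      = derivWithin (derivWithin v (Icc 0 L)) (Icc 0 L) x0 * tu x0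
        + v x0 * derivWithin (derivWithin tu (Icc 0 L)) (Icc 0 L) x0 := by
    have d1 : DifferentiableWithinAt ℝ
        (fun x => derivWithin v (Icc 0 L) x * tu x) (Icc 0 L) x0 :=
      (hv1.differentiableOn one_ne_zero x0 hx0).mul (htudiff x0 hx0)
    have d2 : DifferentiableWithinAt ℝ
        (fun x => v x * derivWithin tu (Icc 0 L) x) (Icc 0 L) x0 :=
      (hvdiff x0 hx0).mul (htu1.differentiableOn one_ne_zero x0 hx0)
    rw [derivWithin_congr hud (hud hx0), derivWithin_fun_add d1 d2,
      derivWithin_fun_mul (hv1.differentiableOn one_ne_zero x0 hx0) (htudiff x0 hx0),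
      derivWithin_fun_mul (hvdiff x0 hx0) (htu1.differentiableOn one_ne_zero x0 hx0),
      hvd0]
    ring
  -- use the equations at x0
  have hequ := hueq x0 hx0
  have heqt := htueq x0 hx0
  rw [iter2 u x0 hx0, hudd] at hequ
  rw [iter2 tu x0 hx0] at heqt
  set A := derivWithin (derivWithin v (Icc 0 L)) (Icc 0 L) x0 with hA
  set B := derivWithin (derivWithin tu (Icc 0 L)) (Icc 0 L) x0 with hB
  have hux0 : u x0 = v x0 * tu x0 := huv hx0
  have htux0 : 0 < tu x0 := htupos x0 hx0
  have hux0pos : 0 < u x0 := hupos x0 hx0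
  have hAB : ε * (A * tu x0) ≤ 0 :=
    mul_nonpos_of_nonneg_of_nonpos hε.le (mul_nonpos_of_nonpos_of_nonneg hvdd htux0.le)
  have hεB : ε * B = -(tu x0 * (m x0 - tu x0)) := by linarith
  have h3 : v x0 * (ε * B) = v x0 * -(tu x0 * (m x0 - tu x0)) := by rw [hεB]
  have h4 : u x0 * (m x0 - tu x0) = v x0 * tu x0 * (m x0 - tu x0) := by rw [← hux0]
  -- key inequality: F(u x0)/d(u x0) * w x0 ≤ u x0 * (tu x0 - u x0)
  have hkey : F (u x0) / d (u x0) * w x0 ≤ u x0 * (tu x0 - u x0) := by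
    nlinarith [hAB, h3, h4, hequ]
  have hFu0 : 0 < F (u x0) := by
    have := hFmono (le_refl (0:ℝ)) hux0pos.le hux0pos
    rwa [hF0] at this
  have hlhs : 0 < F (u x0) / d (u x0) * w x0 :=
    mul_pos (div_pos hFu0 (hd_pos _ hux0pos.le)) (hwpos x0 hx0)
  have hut : u x0 < tu x0 := by nlinarith [hkey, hlhs, hux0pos]
  have hvlt1 : v x0 < 1 := by
    simp only [hv]
    rw [div_lt_one htux0]
    exact hut
  -- comparison everywhere
  have hcompare : ∀ x ∈ Icc (0:ℝ) L, u x < tu x3 := by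
    intro x hx
    have h1 : v x < 1 := lt_of_le_of_lt (hvmax x hx) hvlt1
    have h2 : u x < tu x := (div_lt_one (htupos x hx)).1 h1
    exact lt_of_lt_of_le h2 (hx3max x hx)
  -- max of w
  obtain ⟨x1, hx1, hwmax⟩ := hcomp.exists_isMaxOn hne hw2.continuousOn
  rw [isMaxOn_iff] at hwmax
  have hwdd : derivWithin (derivWithin w (Icc 0 L)) (Icc 0 L) x1 ≤ 0 :=
    second_deriv_nonpos_at_max L hL w hw2 hw0 hwL x1 hx1 hwmax
  have heqw := hweq x1 hx1
  rw [iter2 w x1 hx1] at heqw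
  have hdpos : 0 < d (u x1) := hd_pos _ (le_of_lt (hupos x1 hx1))
  have hwx1 : 0 < w x1 := hwpos x1 hx1
  have h1 : 0 ≤ (α * F (u x1) - θ) / d (u x1) * w x1 := by
    have := mul_nonneg hμ.le (neg_nonneg.2 hwdd)
    linarith
  have h2 : 0 ≤ α * F (u x1) - θ := by
    by_contra hcon
    push_neg at hcon
    have : (α * F (u x1) - θ) / d (u x1) * w x1 < 0 :=
      mul_neg_of_neg_of_pos (div_neg_of_neg_of_pos hcon hdpos) hwx1
    linarith
  have hFlt : F (u x1) < F (tu x3) :=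
    hFmono (le_of_lt (hupos x1 hx1)) (le_of_lt (htupos x3 hx3)) (hcompare x1 hx1)
  have := mul_lt_mul_of_pos_left hFlt hα
  linarith
end

section
/- Suppose θ satisfies (α/|Ω|) ∫_Ω F(u(x)) dx < θ < α F(max_{cl(Ω)} u). Then there exists a unique k* > 0 such that for every k ≥ 0, sgn(∫_Ω (α F(u(x)) − θ) e^{k u(x)} dx) = sgn(k − k*); that is, the integral ∫_Ω (α F(u(x)) − θ) e^{k u(x)} dx is negative for 0 ≤ k < k*, equals zero at k = k*, and is positive for k > k*. -/
set_option maxHeartbeats 4000000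


open MeasureTheory

/-- if `(α/|Ω|) ∫_Ω F(u) < θ < α F(max_{cl Ω} u)`, then there is
a unique `k* > 0` such that `∫_Ω (α F(u) - θ) e^{k u} dx` is negative for
`0 ≤ k < k*`, zero at `k = k*`, and positive for `k > k*`. -/
theorem stmt_5 (N : ℕ) (Ω : Set (EuclideanSpace ℝ (Fin N)))
    (hΩo : IsOpen Ω) (hΩne : Ω.Nonempty) (hΩb : Bornology.IsBounded Ω)
    (u : EuclideanSpace ℝ (Fin N) → ℝ)
    (hu_cont : ContinuousOn u (closure Ω))
    (hu_nonneg : ∀ x ∈ closure Ω, 0 ≤ u x)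
    (hu_noncon : ∃ x ∈ closure Ω, ∃ y ∈ closure Ω, u x ≠ u y)
    (F : ℝ → ℝ)
    -- (H2)
    (hF_smooth : ContDiffOn ℝ 1 F (Set.Ici 0)) (hF0 : F 0 = 0)
    (hF_deriv : ∀ s ∈ Set.Ici (0:ℝ), 0 < derivWithin F (Set.Ici 0) s)
    (α θ : ℝ) (hα : 0 < α)
    (hθl : α / (volume Ω).toReal * ∫ x in Ω, F (u x) < θ)
    (hθu : θ < α * F (sSup (u '' closure Ω))) :
    ∃! kstar : ℝ, 0 < kstar ∧
      (∀ k : ℝ, 0 ≤ k → k < kstar →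
        (∫ x in Ω, (α * F (u x) - θ) * Real.exp (k * u x)) < 0) ∧
      (∫ x in Ω, (α * F (u x) - θ) * Real.exp (kstar * u x)) = 0 ∧
      (∀ k : ℝ, kstar < k →
        0 < ∫ x in Ω, (α * F (u x) - θ) * Real.exp (k * u x)) := by
  -- basic facts about Ω
  have hKc : IsCompact (closure Ω) := hΩb.isCompact_closure
  have hKne : (closure Ω).Nonempty := hΩne.closure
  have hΩK : Ω ⊆ closure Ω := subset_closure
  have hΩm : MeasurableSet Ω := hΩo.measurableSet
  have hμpos : 0 < volume Ω := hΩo.measure_pos volume hΩne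
  have hμfin : volume Ω < ⊤ := hΩb.measure_lt_top
  have hμr : 0 < (volume Ω).toReal := ENNReal.toReal_pos hμpos.ne' hμfin.ne
  -- facts about F
  have hFc : ContinuousOn F (Set.Ici 0) := hF_smooth.continuousOn
  have hFmono : StrictMonoOn F (Set.Ici 0) := by
    apply strictMonoOn_of_hasDerivWithinAt_pos (f' := derivWithin F (Set.Ici 0))
      (convex_Ici 0) hFc
    · intro x hx
      have hdx : DifferentiableWithinAt ℝ F (Set.Ici 0) x :=
        (hF_smooth.differentiableOn one_ne_zero) x (interior_subset hx)
      exact hdx.hasDerivWithinAt.mono interior_subset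
    · intro x hx; exact hF_deriv x (interior_subset hx)
  have hF_nonneg : ∀ s : ℝ, 0 ≤ s → 0 ≤ F s := by
    intro s hs
    rcases eq_or_lt_of_le hs with h | h
    · rw [← h, hF0]
    · rw [← hF0]; exact (hFmono Set.self_mem_Ici (Set.mem_Ici.mpr hs) h).le
  -- the max of u
  set M := sSup (u '' closure Ω) with hM_def
  have himgc : IsCompact (u '' closure Ω) := hKc.image_of_continuousOn hu_cont
  obtain ⟨z, hzK, hzM⟩ : M ∈ u '' closure Ω := himgc.sSup_mem (hKne.image u)
  have hle_M : ∀ x ∈ closure Ω, u x ≤ M :=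
    fun x hx => le_csSup himgc.bddAbove ⟨x, hx, rfl⟩
  have hM0 : 0 ≤ M := hzM ▸ hu_nonneg z hzK
  -- θ is positive
  have hθpos : 0 < θ := by
    refine lt_of_le_of_lt ?_ hθl
    have hI : 0 ≤ ∫ x in Ω, F (u x) :=
      setIntegral_nonneg hΩm fun x hx => hF_nonneg _ (hu_nonneg x (hΩK hx))
    exact mul_nonneg (div_nonneg hα.le hμr.le) hI
  -- existence of b with α F b = θ
  have hFM : θ / α < F M := by
    rw [div_lt_iff₀ hα]; linarith [hθu]
  obtain ⟨b, hbmem, hFb⟩ : θ / α ∈ F '' Set.Ioo 0 M := by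
    apply intermediate_value_Ioo hM0 (hFc.mono Set.Icc_subset_Ici_self)
    constructor
    · rw [hF0]; positivity
    · exact hFM
  have hb0 : 0 < b := hbmem.1
  have hbM : b < M := hbmem.2
  have hαFb : α * F b = θ := by field_simp at hFb; linarith [hFb]
  -- sign of g s = α F s - θ
  have hg_neg : ∀ s : ℝ, 0 ≤ s → s < b → α * F s - θ < 0 := by
    intro s hs hsb
    have := hFmono hs (hb0.le) hsb
    nlinarith
  have hg_pos : ∀ s : ℝ, b < s → 0 < α * F s - θ := by
    intro s hbs
    have := hFmono hb0.le (hb0.trans hbs).le hbs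
    nlinarith
  -- composition and integrability helpers
  have hcomp : ∀ h : ℝ → ℝ, ContinuousOn h (Set.Ici 0) →
      ContinuousOn (fun x => h (u x)) (closure Ω) :=
    fun h hh => hh.comp hu_cont fun x hx => hu_nonneg x hx
  have hInt : ∀ h : ℝ → ℝ, ContinuousOn h (Set.Ici 0) →
      IntegrableOn (fun x => h (u x)) Ω volume :=
    fun h hh => ((hcomp h hh).integrableOn_compact hKc).mono_set hΩK
  have hgc : ContinuousOn (fun s : ℝ => α * F s - θ) (Set.Ici 0) :=
    (continuousOn_const.mul hFc).sub continuousOn_const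
  have hfc : ∀ k : ℝ, ContinuousOn
      (fun s : ℝ => (α * F s - θ) * Real.exp (k * (s - b))) (Set.Ici 0) :=
    fun k => hgc.mul
      (Real.continuous_exp.comp (continuous_const.mul (continuous_id.sub continuous_const))).continuousOn
  have hfint : ∀ k : ℝ, IntegrableOn
      (fun x => (α * F (u x) - θ) * Real.exp (k * (u x - b))) Ω volume :=
    fun k => hInt _ (hfc k)
  -- the auxiliary function H
  set H : ℝ → ℝ :=
    fun k => ∫ x in Ω, (α * F (u x) - θ) * Real.exp (k * (u x - b)) with hH_def
  -- positivity of integrals of nonneg functions, positive somewhere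
  have hpos_int : ∀ f : EuclideanSpace ℝ (Fin N) → ℝ, ContinuousOn f (closure Ω) →
      (∀ x ∈ Ω, 0 ≤ f x) → (∃ x ∈ Ω, 0 < f x) → 0 < ∫ x in Ω, f x := by
    rintro f hfc' hfnn ⟨x0, hx0, hfx0⟩
    have hfi : IntegrableOn f Ω := (hfc'.integrableOn_compact hKc).mono_set hΩK
    rw [setIntegral_pos_iff_support_of_nonneg_ae ((ae_restrict_iff' hΩm).2 (ae_of_all _ hfnn)) hfi]
    have hopen : IsOpen (Ω ∩ f ⁻¹' Set.Ioi 0) :=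
      (hfc'.mono hΩK).isOpen_inter_preimage hΩo isOpen_Ioi
    refine lt_of_lt_of_le (hopen.measure_pos volume ⟨x0, hx0, hfx0⟩) (measure_mono ?_)
    rintro x ⟨hxΩ, hxf⟩
    exact ⟨ne_of_gt hxf, hxΩ⟩
  -- u is not a.e. equal to b on Ω
  have hne : ∃ x ∈ Ω, u x ≠ b := by
    by_contra hcon
    push_neg at hcon
    obtain ⟨x, hx, y, hy, hxy⟩ := hu_noncon
    have key : ∀ w ∈ closure Ω, u w = b := by
      intro w hw
      haveI : (nhdsWithin w Ω).NeBot := mem_closure_iff_nhdsWithin_neBot.mp hw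
      have h1 : Filter.Tendsto u (nhdsWithin w Ω) (nhds (u w)) :=
        (hu_cont w hw).mono_left (nhdsWithin_mono _ hΩK)
      have h2 : Filter.Tendsto u (nhdsWithin w Ω) (nhds b) := by
        apply Filter.Tendsto.congr' _ tendsto_const_nhds
        filter_upwards [self_mem_nhdsWithin] with v hv using (hcon v hv).symm
      exact tendsto_nhds_unique h1 h2
    exact hxy (by rw [key x hx, key y hy])
  -- H is strictly monotone
  have hHmono : StrictMono H := by
    intro k1 k2 hk
    rw [← sub_pos]
    have hsub : H k2 - H k1 = ∫ x in Ω, (α * F (u x) - θ) *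
        (Real.exp (k2 * (u x - b)) - Real.exp (k1 * (u x - b))) := by
      rw [hH_def, ← integral_sub (hfint k2) (hfint k1)]
      apply integral_congr_ae
      filter_upwards with x
      ring
    rw [hsub]
    have hptwise : ∀ s : ℝ, 0 ≤ s →
        0 ≤ (α * F s - θ) * (Real.exp (k2 * (s - b)) - Real.exp (k1 * (s - b))) := by
      intro s hs
      rcases lt_trichotomy s b with h | h | h
      · apply mul_nonneg_of_nonpos_of_nonpos (hg_neg s hs h).le
        have : k2 * (s - b) ≤ k1 * (s - b) := by nlinarith
        simpa using Real.exp_le_exp.2 this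
      · simp [h, hαFb]
      · apply mul_nonneg (hg_pos s h).le
        have : k1 * (s - b) ≤ k2 * (s - b) := by nlinarith
        simpa using Real.exp_le_exp.2 this
    apply hpos_int
    · exact hcomp (fun s => (α * F s - θ) *
        (Real.exp (k2 * (s - b)) - Real.exp (k1 * (s - b))))
        (hgc.mul (((Real.continuous_exp.comp
            (continuous_const.mul (continuous_id.sub continuous_const))).sub
          (Real.continuous_exp.comp
            (continuous_const.mul (continuous_id.sub continuous_const)))).continuousOn))
    · exact fun x hx => hptwise (u x) (hu_nonneg x (hΩK hx))
    · obtain ⟨x0, hx0, hx0b⟩ := hne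
      refine ⟨x0, hx0, ?_⟩
      rcases lt_or_gt_of_ne hx0b with h | h
      · apply mul_pos_of_neg_of_neg (hg_neg _ (hu_nonneg x0 (hΩK hx0)) h)
        have : k2 * (u x0 - b) < k1 * (u x0 - b) := by nlinarith
        simpa using Real.exp_lt_exp.2 this
      · apply mul_pos (hg_pos _ h)
        have : k1 * (u x0 - b) < k2 * (u x0 - b) := by nlinarith
        simpa using Real.exp_lt_exp.2 this
  -- H 0 < 0
  have hH0 : H 0 < 0 := by
    have h1 : H 0 = α * (∫ x in Ω, F (u x)) - θ * (volume Ω).toReal := by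
      rw [hH_def]
      simp only [zero_mul, Real.exp_zero, mul_one]
      rw [integral_sub (by exact hInt (fun s => α * F s) (continuousOn_const.mul hFc))
        (integrableOn_const hμfin.ne : IntegrableOn (fun _ => θ) Ω volume)]
      rw [integral_const_mul, setIntegral_const]
      simp [mul_comm, Measure.real]
    rw [h1]
    rw [div_mul_eq_mul_div, div_lt_iff₀ hμr] at hθl
    nlinarith
  -- there exists k1 with H k1 > 0
  obtain ⟨C, hC⟩ : ∃ C : ℝ, ∀ x ∈ closure Ω, ‖α * F (u x) - θ‖ ≤ C :=
    hKc.exists_bound_of_continuousOn (hcomp _ hgc)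
  have hC0 : 0 ≤ C := le_trans (norm_nonneg _) (hC z hzK)
  obtain ⟨k1, hk1pos, hHk1⟩ : ∃ k1 : ℝ, 0 < k1 ∧ 0 < H k1 := by
    set c := (b + M) / 2 with hc_def
    have hbc : b < c := by rw [hc_def]; linarith
    have hcM : c < M := by rw [hc_def]; linarith
    have hc0 : 0 < c := hb0.trans hbc
    set A := Ω ∩ u ⁻¹' Set.Ioi c with hA_def
    have hAopen : IsOpen A := (hu_cont.mono hΩK).isOpen_inter_preimage hΩo isOpen_Ioi
    have hAne : A.Nonempty := by
      haveI : (nhdsWithin z Ω).NeBot := mem_closure_iff_nhdsWithin_neBot.mp hzK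
      have h1 : Filter.Tendsto u (nhdsWithin z Ω) (nhds (u z)) :=
        (hu_cont z hzK).mono_left (nhdsWithin_mono _ hΩK)
      have hev : ∀ᶠ x in nhdsWithin z Ω, c < u x :=
        h1.eventually (eventually_gt_nhds (hzM ▸ hcM))
      obtain ⟨x, hxc, hx⟩ := (hev.and self_mem_nhdsWithin).exists
      exact ⟨x, hx, hxc⟩
    have hAΩ : A ⊆ Ω := Set.inter_subset_left
    have hAfin : volume A < ⊤ := (measure_mono hAΩ).trans_lt hμfin
    set VA := (volume A).toReal with hVA_def
    set VΩ := (volume Ω).toReal with hVΩ_def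
    have hVA : 0 < VA :=
      ENNReal.toReal_pos (hAopen.measure_pos volume hAne).ne' hAfin.ne
    set δ := α * F c - θ with hδ_def
    have hδ : 0 < δ := hg_pos c hbc
    set k1 := (C * VΩ + 1) / (δ * VA * (c - b)) with hk1_def
    have hcb : 0 < c - b := by linarith
    have hk1pos : 0 < k1 := by positivity
    have hk1eq : δ * VA * (c - b) * k1 = C * VΩ + 1 := by
      rw [hk1_def, mul_div_cancel₀]
      positivity
    refine ⟨k1, hk1pos, ?_⟩
    have hsplit : H k1 = (∫ x in A, (α * F (u x) - θ) * Real.exp (k1 * (u x - b)))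
        + ∫ x in Ω \ A, (α * F (u x) - θ) * Real.exp (k1 * (u x - b)) := by
      rw [hH_def]
      rw [← setIntegral_union disjoint_sdiff_self_right (hΩm.diff hAopen.measurableSet)
        ((hfint k1).mono_set hAΩ) ((hfint k1).mono_set Set.diff_subset),
        Set.union_diff_cancel hAΩ]
    have hbound1 : δ * Real.exp (k1 * (c - b)) * VA ≤
        ∫ x in A, (α * F (u x) - θ) * Real.exp (k1 * (u x - b)) := by
      have := setIntegral_mono_on
        (integrableOn_const hAfin.ne :
          IntegrableOn (fun _ => δ * Real.exp (k1 * (c - b))) A volume)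
        ((hfint k1).mono_set hAΩ) hAopen.measurableSet ?_
      · rw [setIntegral_const, smul_eq_mul] at this
        calc δ * Real.exp (k1 * (c - b)) * VA
            = VA * (δ * Real.exp (k1 * (c - b))) := by ring
          _ ≤ _ := this
      · intro x hx
        have hxc : c < u x := hx.2
        have hx0 : (0:ℝ) ≤ u x := hu_nonneg x (hΩK (hAΩ hx))
        have hFle : F c ≤ F (u x) :=
          hFmono.monotoneOn (Set.mem_Ici.mpr hc0.le) (Set.mem_Ici.mpr hx0) hxc.le
        have hEle : Real.exp (k1 * (c - b)) ≤ Real.exp (k1 * (u x - b)) := by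
          rw [Real.exp_le_exp]
          nlinarith
        apply mul_le_mul _ hEle (Real.exp_pos _).le
        · nlinarith
        · nlinarith
    have hbound2 : -C * VΩ ≤
        ∫ x in Ω \ A, (α * F (u x) - θ) * Real.exp (k1 * (u x - b)) := by
      have hptb : ∀ x ∈ Ω \ A, -C ≤ (α * F (u x) - θ) * Real.exp (k1 * (u x - b)) := by
        intro x hx
        have hxK : x ∈ closure Ω := hΩK hx.1
        have hCx : -C ≤ α * F (u x) - θ := by
          have := hC x hxK
          rw [Real.norm_eq_abs, abs_le] at this
          exact this.1
        rcases le_or_gt b (u x) with h | h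
        · have hg0 : 0 ≤ α * F (u x) - θ := by
            rcases eq_or_lt_of_le h with h' | h'
            · rw [← h', hαFb]; linarith
            · exact (hg_pos _ h').le
          nlinarith [Real.exp_pos (k1 * (u x - b)), mul_nonneg hg0 (Real.exp_pos (k1 * (u x - b))).le]
        · have hg0 : α * F (u x) - θ < 0 := hg_neg _ (hu_nonneg x hxK) h
          have hE1 : Real.exp (k1 * (u x - b)) ≤ 1 := by
            rw [← Real.exp_zero, Real.exp_le_exp]
            nlinarith
          nlinarith [mul_le_mul_of_nonpos_left hE1 hg0.le]
      have := setIntegral_mono_on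
        (integrableOn_const ((measure_mono Set.diff_subset).trans_lt hμfin).ne :
          IntegrableOn (fun _ => -C) (Ω \ A) volume)
        ((hfint k1).mono_set Set.diff_subset) (hΩm.diff hAopen.measurableSet) hptb
      rw [setIntegral_const, smul_eq_mul] at this
      simp only [Measure.real] at this
      refine le_trans ?_ this
      have hmle : (volume (Ω \ A)).toReal ≤ VΩ :=
        ENNReal.toReal_mono hμfin.ne (measure_mono Set.diff_subset)
      nlinarith
    have hexp : k1 * (c - b) + 1 ≤ Real.exp (k1 * (c - b)) := Real.add_one_le_exp _
    have hEpos : (0:ℝ) < Real.exp (k1 * (c - b)) := Real.exp_pos _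
    nlinarith [hsplit, hbound1, hbound2, mul_le_mul_of_nonneg_right hexp (mul_nonneg hδ.le hVA.le)]
  -- H is continuous
  have hHcont : Continuous H := by
    rw [continuous_iff_continuousAt]
    intro k0
    rw [hH_def]
    apply continuousAt_of_dominated (bound := fun _ : EuclideanSpace ℝ (Fin N) =>
        C * Real.exp ((|k0| + 1) * (M + b)))
    · filter_upwards with k
      exact ((hcomp _ (hfc k)).mono hΩK).aestronglyMeasurable hΩm
    · filter_upwards [Metric.ball_mem_nhds k0 one_pos] with k hk
      rw [ae_restrict_iff' hΩm]
      filter_upwards with x hx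
      have hx0 : (0:ℝ) ≤ u x := hu_nonneg x (hΩK hx)
      have hxM : u x ≤ M := hle_M x (hΩK hx)
      have h1 : |u x - b| ≤ M + b := by
        rw [abs_le]; constructor <;> linarith
      have h2 : |k| ≤ |k0| + 1 := by
        rw [Metric.mem_ball, Real.dist_eq] at hk
        calc |k| = |k0 + (k - k0)| := by ring_nf
          _ ≤ |k0| + |k - k0| := abs_add_le _ _
          _ ≤ |k0| + 1 := by linarith
      rw [norm_mul]
      apply mul_le_mul (hC x (hΩK hx)) _ (norm_nonneg _) hC0
      rw [Real.norm_eq_abs, Real.abs_exp, Real.exp_le_exp]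
      calc k * (u x - b) ≤ |k * (u x - b)| := le_abs_self _
        _ = |k| * |u x - b| := abs_mul _ _
        _ ≤ (|k0| + 1) * (M + b) := by
            apply mul_le_mul h2 h1 (abs_nonneg _)
            positivity
    · exact integrableOn_const hμfin.ne
    · filter_upwards with x
      exact (continuous_const.mul (Real.continuous_exp.comp
        (continuous_id.mul continuous_const))).continuousAt
  -- intermediate value theorem
  obtain ⟨kstar, hks_mem, hksH⟩ : ∃ kstar ∈ Set.Ioo 0 k1, H kstar = 0 := by
    have := intermediate_value_Ioo hk1pos.le hHcont.continuousOn (a := 0) (b := k1)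
    obtain ⟨kstar, hmem, hval⟩ := this ⟨hH0, hHk1⟩
    exact ⟨kstar, hmem, hval⟩
  -- relation between the original integral and H
  have hGH : ∀ k : ℝ, (∫ x in Ω, (α * F (u x) - θ) * Real.exp (k * u x)) =
      Real.exp (k * b) * H k := by
    intro k
    rw [hH_def, ← integral_const_mul]
    apply integral_congr_ae
    filter_upwards with x
    rw [mul_left_comm, ← Real.exp_add]
    ring_nf
  refine ⟨kstar, ⟨hks_mem.1, ?_, ?_, ?_⟩, ?_⟩
  · intro k hk0 hkks
    rw [hGH]
    exact mul_neg_of_pos_of_neg (Real.exp_pos _) (hksH ▸ hHmono hkks)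
  · rw [hGH, hksH, mul_zero]
  · intro k hkks
    rw [hGH]
    exact mul_pos (Real.exp_pos _) (hksH ▸ hHmono hkks)
  · rintro k' ⟨hk'pos, _, hk'zero, _⟩
    rw [hGH, mul_eq_zero] at hk'zero
    have hHk' : H k' = 0 := hk'zero.resolve_left (Real.exp_ne_zero _)
    exact hHmono.injective (hHk'.trans hksH.symm)
end

section
/- Let ρ ∈ ℝ satisfy 0 ≤ ρ ≤ (α/|Ω|) ∫_Ω F(u(x)) dx. Then the function k ↦ ∫_Ω (α F(u(x)) − ρ) e^{k u(x)} dx is strictly increasing on [0, ∞). -/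
open MeasureTheory

/-- if `0 ≤ ρ ≤ (α/|Ω|) ∫_Ω F(u)`, then
`k ↦ ∫_Ω (α F(u) - ρ) e^{k u} dx` is strictly increasing on `[0, ∞)`. -/
theorem stmt_6 (N : ℕ) (Ω : Set (EuclideanSpace ℝ (Fin N)))
    (hΩo : IsOpen Ω) (hΩne : Ω.Nonempty) (hΩb : Bornology.IsBounded Ω)
    (u : EuclideanSpace ℝ (Fin N) → ℝ)
    (hu_cont : ContinuousOn u (closure Ω))
    (hu_nonneg : ∀ x ∈ closure Ω, 0 ≤ u x)
    (hu_noncon : ∃ x ∈ closure Ω, ∃ y ∈ closure Ω, u x ≠ u y)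
    (F : ℝ → ℝ)
    -- (H2)
    (hF_smooth : ContDiffOn ℝ 1 F (Set.Ici 0)) (hF0 : F 0 = 0)
    (hF_deriv : ∀ s ∈ Set.Ici (0:ℝ), 0 < derivWithin F (Set.Ici 0) s)
    (α ρ : ℝ) (hα : 0 < α)
    (hρ0 : 0 ≤ ρ) (hρ : ρ ≤ α / (volume Ω).toReal * ∫ x in Ω, F (u x)) :
    StrictMonoOn (fun k : ℝ => ∫ x in Ω, (α * F (u x) - ρ) * Real.exp (k * u x))
      (Set.Ici 0) := by
  classical
  have hK : IsCompact (closure Ω) := hΩb.isCompact_closure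
  have hΩc : Ω ⊆ closure Ω := subset_closure
  -- F is strictly monotone on [0,∞)
  have hFmono : StrictMonoOn F (Set.Ici 0) := by
    apply strictMonoOn_of_deriv_pos (convex_Ici 0) hF_smooth.continuousOn
    intro x hx
    rw [interior_Ici] at hx
    rw [← derivWithin_of_mem_nhds (Ici_mem_nhds hx)]
    exact hF_deriv x (Set.mem_Ici.2 (le_of_lt (Set.mem_Ioi.1 hx)))
  have hFc : ContinuousOn (fun x => F (u x)) (closure Ω) :=
    hF_smooth.continuousOn.comp hu_cont (fun x hx => hu_nonneg x hx)
  have hint : ∀ f : EuclideanSpace ℝ (Fin N) → ℝ, ContinuousOn f (closure Ω) →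
      IntegrableOn f Ω volume := fun f hf =>
    (hf.integrableOn_compact hK).mono_set hΩc
  have hμfin : volume Ω < ⊤ := hΩb.measure_lt_top
  have hμpos : 0 < (volume Ω).toReal :=
    ENNReal.toReal_pos (hΩo.measure_pos volume hΩne).ne' hμfin.ne
  -- ∫ g ≥ 0 where g x = α F(u x) - ρ
  have hconst_int : ∀ c : ℝ, IntegrableOn (fun _ => c) Ω volume := fun c =>
    integrableOn_const hμfin.ne
  have hg_cont : ContinuousOn (fun x => α * F (u x) - ρ) (closure Ω) :=
    ((hFc.const_smul α).sub continuousOn_const)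
  have hgint : IntegrableOn (fun x => α * F (u x) - ρ) Ω volume := hint _ hg_cont
  have hIg : ∫ x in Ω, (α * F (u x) - ρ) =
      α * (∫ x in Ω, F (u x)) - ρ * (volume Ω).toReal := by
    rw [integral_sub ((hint _ hFc).const_mul α) (hconst_int ρ)]
    rw [integral_const_mul, setIntegral_const, smul_eq_mul, measureReal_def]; ring
  have hg0 : 0 ≤ ∫ x in Ω, (α * F (u x) - ρ) := by
    rw [hIg]
    have : ρ * (volume Ω).toReal ≤ α * ∫ x in Ω, F (u x) := by
      rw [div_mul_eq_mul_div] at hρ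
      exact (le_div_iff₀ hμpos).1 hρ
    linarith
  -- the maximum of u
  obtain ⟨z, hz, hzmax⟩ := hK.exists_isMaxOn hΩne.closure hu_cont
  set M := u z with hM
  have hM0 : 0 ≤ M := hu_nonneg z hz
  -- existence of u₀ with F u₀ = ρ/α
  have hFMb : ∫ x in Ω, F (u x) ≤ F M * (volume Ω).toReal := by
    have := setIntegral_mono_on (hint _ hFc) (hconst_int (F M)) hΩo.measurableSet
      (fun x hx => hFmono.monotoneOn (hu_nonneg x (hΩc hx)) hM0 (hzmax (hΩc hx)))
    rwa [setIntegral_const, smul_eq_mul, mul_comm] at this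
  have hρFM : ρ / α ≤ F M := by
    have h1 : α / (volume Ω).toReal * ∫ x in Ω, F (u x) ≤ α * F M := by
      rw [div_mul_eq_mul_div, div_le_iff₀ hμpos]
      calc α * ∫ x in Ω, F (u x) ≤ α * (F M * (volume Ω).toReal) := by
            exact mul_le_mul_of_nonneg_left hFMb hα.le
        _ = α * F M * (volume Ω).toReal := by ring
    rw [div_le_iff₀ hα, mul_comm]
    linarith
  obtain ⟨u₀, hu₀mem, hu₀⟩ : ∃ u₀ ∈ Set.Icc 0 M, F u₀ = ρ / α := by
    have := intermediate_value_Icc hM0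
      (hF_smooth.continuousOn.mono (Set.Icc_subset_Ici_self))
    have hmem : ρ / α ∈ Set.Icc (F 0) (F M) := by
      constructor
      · rw [hF0]; positivity
      · exact hρFM
    exact this hmem
  have hu₀0 : (0:ℝ) ≤ u₀ := hu₀mem.1
  have hραF : α * F u₀ = ρ := by
    rw [hu₀]; field_simp
  -- some point in Ω with u ≠ u₀
  obtain ⟨x₀, hx₀Ω, hx₀⟩ : ∃ x₀ ∈ Ω, u x₀ ≠ u₀ := by
    by_contra h
    push_neg at h
    have heq : Set.EqOn u (fun _ => u₀) (closure Ω) :=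
      Set.EqOn.of_subset_closure (fun x hx => h x hx) hu_cont continuousOn_const hΩc
        subset_rfl
    obtain ⟨x, hx, y, hy, hxy⟩ := hu_noncon
    exact hxy (by rw [heq hx, heq hy])
  -- main proof
  intro k₁ hk₁ k₂ hk₂ hlt
  simp only
  set ψ : ℝ → ℝ := fun s => Real.exp (k₂ * s) - Real.exp (k₁ * s) with hψ
  have hk₁0 : (0:ℝ) ≤ k₁ := hk₁
  have hψd : ∀ x : ℝ, HasDerivAt ψ (k₂ * Real.exp (k₂ * x) - k₁ * Real.exp (k₁ * x)) x := by
    intro x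
    have h1 := (((hasDerivAt_id x).const_mul k₂).exp).sub
      (((hasDerivAt_id x).const_mul k₁).exp)
    simp only [id_eq, mul_one] at h1
    exact h1.congr_deriv (by ring)
  have hψc : Continuous ψ := by fun_prop
  have hψmono : StrictMonoOn ψ (Set.Ici 0) := by
    apply strictMonoOn_of_deriv_pos (convex_Ici 0) hψc.continuousOn
    intro x hx
    rw [interior_Ici] at hx
    have hx0 : (0:ℝ) < x := hx
    rw [(hψd x).deriv]
    have he : Real.exp (k₁ * x) ≤ Real.exp (k₂ * x) :=
      Real.exp_le_exp.2 (by nlinarith)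
    nlinarith [Real.exp_pos (k₁ * x), Real.exp_pos (k₂ * x)]
  have hm0 : 0 ≤ ψ u₀ := by
    simp only [hψ, sub_nonneg]
    exact Real.exp_le_exp.2 (by nlinarith)
  -- pointwise sign facts
  have key : ∀ x ∈ closure Ω,
      0 ≤ (α * F (u x) - ρ) * (ψ (u x) - ψ u₀) ∧
      (u x ≠ u₀ → 0 < (α * F (u x) - ρ) * (ψ (u x) - ψ u₀)) := by
    intro x hx
    have hux : u x ∈ Set.Ici (0:ℝ) := hu_nonneg x hx
    rcases lt_trichotomy (u x) u₀ with hlt' | heq | hgt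
    · have h1 : F (u x) < F u₀ := hFmono hux hu₀0 hlt'
      have h2 : ψ (u x) < ψ u₀ := hψmono hux hu₀0 hlt'
      have hpos : 0 < (α * F (u x) - ρ) * (ψ (u x) - ψ u₀) := by
        apply mul_pos_of_neg_of_neg <;> nlinarith
      exact ⟨hpos.le, fun _ => hpos⟩
    · rw [heq]
      simp [hραF]
    · have h1 : F u₀ < F (u x) := hFmono hu₀0 hux hgt
      have h2 : ψ u₀ < ψ (u x) := hψmono hu₀0 hux hgt
      have hpos : 0 < (α * F (u x) - ρ) * (ψ (u x) - ψ u₀) := by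
        apply mul_pos <;> nlinarith
      exact ⟨hpos.le, fun _ => hpos⟩
  -- the positive part
  set h : EuclideanSpace ℝ (Fin N) → ℝ :=
    fun x => (α * F (u x) - ρ) * (ψ (u x) - ψ u₀) with hh
  have hh_cont : ContinuousOn h (closure Ω) :=
    hg_cont.mul (((hψc.comp_continuousOn hu_cont)).sub continuousOn_const)
  have hh_int : IntegrableOn h Ω volume := hint _ hh_cont
  have hVopen : IsOpen {x | x ∈ Ω ∧ u x ≠ u₀} := by
    have : {x | x ∈ Ω ∧ u x ≠ u₀} = Ω ∩ u ⁻¹' {u₀}ᶜ := rfl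
    rw [this]
    exact (hu_cont.mono hΩc).isOpen_inter_preimage hΩo isOpen_compl_singleton
  have hIh : 0 < ∫ x in Ω, h x := by
    rw [setIntegral_pos_iff_support_of_nonneg_ae _ hh_int]
    · refine lt_of_lt_of_le (hVopen.measure_pos volume ⟨x₀, hx₀Ω, hx₀⟩) (measure_mono ?_)
      rintro x ⟨hxΩ, hxu⟩
      exact ⟨((key x (hΩc hxΩ)).2 hxu).ne', hxΩ⟩
    · exact (ae_restrict_iff' hΩo.measurableSet).2
        (ae_of_all _ fun x hx => (key x (hΩc hx)).1)
  -- integrability of the pieces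
  have hexp_cont : ∀ k : ℝ, ContinuousOn (fun x => Real.exp (k * u x)) (closure Ω) :=
    fun k => (Real.continuous_exp.comp (continuous_const.mul continuous_id)).comp_continuousOn
      hu_cont
  have hint1 : IntegrableOn (fun x => (α * F (u x) - ρ) * Real.exp (k₁ * u x)) Ω volume :=
    hint _ (hg_cont.mul (hexp_cont k₁))
  have hint2 : IntegrableOn (fun x => (α * F (u x) - ρ) * Real.exp (k₂ * u x)) Ω volume :=
    hint _ (hg_cont.mul (hexp_cont k₂))
  -- final computation
  rw [← sub_pos, ← integral_sub hint2 hint1]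
  have hsplit : ∀ x : EuclideanSpace ℝ (Fin N),
      (α * F (u x) - ρ) * Real.exp (k₂ * u x) - (α * F (u x) - ρ) * Real.exp (k₁ * u x)
        = h x + ψ u₀ * (α * F (u x) - ρ) := by
    intro x
    simp only [hh, hψ]
    ring
  calc (0:ℝ) < (∫ x in Ω, h x) + ψ u₀ * ∫ x in Ω, (α * F (u x) - ρ) := by positivity
    _ = ∫ x in Ω, (h x + ψ u₀ * (α * F (u x) - ρ)) := by
        rw [integral_add hh_int (hgint.const_mul (ψ u₀)), integral_const_mul]
    _ = ∫ x in Ω, ((α * F (u x) - ρ) * Real.exp (k₂ * u x)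
          - (α * F (u x) - ρ) * Real.exp (k₁ * u x)) :=
        integral_congr_ae (ae_of_all _ fun x => (hsplit x).symm)
end

section
/- Let k₀ > 0 and θ ∈ ℝ. If ∫_Ω (α F(u(x)) − θ) e^{k₀ u(x)} dx = 0, then ∫_Ω u(x)(α F(u(x)) − θ) e^{k₀ u(x)} dx > 0. -/
open MeasureTheory Set Filter

/-- if `k₀ > 0` and `∫_Ω (α F(u) - θ) e^{k₀ u} dx = 0`, then
`∫_Ω u (α F(u) - θ) e^{k₀ u} dx > 0`. -/
theorem stmt_7 (N : ℕ) (Ω : Set (EuclideanSpace ℝ (Fin N)))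
    (hΩo : IsOpen Ω) (hΩne : Ω.Nonempty) (hΩb : Bornology.IsBounded Ω)
    (u : EuclideanSpace ℝ (Fin N) → ℝ)
    (hu_cont : ContinuousOn u (closure Ω))
    (hu_nonneg : ∀ x ∈ closure Ω, 0 ≤ u x)
    (hu_noncon : ∃ x ∈ closure Ω, ∃ y ∈ closure Ω, u x ≠ u y)
    (F : ℝ → ℝ)
    -- (H2)
    (hF_smooth : ContDiffOn ℝ 1 F (Set.Ici 0)) (hF0 : F 0 = 0)
    (hF_deriv : ∀ s ∈ Set.Ici (0:ℝ), 0 < derivWithin F (Set.Ici 0) s)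
    (α θ k₀ : ℝ) (hα : 0 < α) (hk₀ : 0 < k₀)
    (hzero : (∫ x in Ω, (α * F (u x) - θ) * Real.exp (k₀ * u x)) = 0) :
    0 < ∫ x in Ω, u x * (α * F (u x) - θ) * Real.exp (k₀ * u x) := by
  set K := closure Ω with hKdef
  have hΩK : Ω ⊆ K := subset_closure
  have hKc : IsCompact K := hΩb.isCompact_closure
  have hKne : K.Nonempty := hΩne.closure
  have hFcont : ContinuousOn F (Ici 0) := hF_smooth.continuousOn
  -- strict monotonicity of F
  have hFmono : StrictMonoOn F (Ici 0) := by
    apply strictMonoOn_of_deriv_pos (convex_Ici 0) hFcont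
    intro x hx
    rw [interior_Ici] at hx
    have : Ici (0:ℝ) ∈ nhds x := mem_of_superset (isOpen_Ioi.mem_nhds hx) Ioi_subset_Ici_self
    rw [← derivWithin_of_mem_nhds this]
    exact hF_deriv x (Ioi_subset_Ici_self hx)
  set g : EuclideanSpace ℝ (Fin N) → ℝ := fun x => (α * F (u x) - θ) * Real.exp (k₀ * u x) with hgdef
  have humaps : MapsTo u K (Ici 0) := fun x hx => hu_nonneg x hx
  have hgcont : ContinuousOn g K := by
    apply ContinuousOn.mul
    · exact (continuousOn_const.mul (hFcont.comp hu_cont humaps)).sub continuousOn_const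
    · exact (Real.continuous_exp.comp_continuousOn (continuousOn_const.mul hu_cont))
  have hgint : IntegrableOn g Ω := (hgcont.integrableOn_compact hKc).mono_set hΩK
  have hugcont : ContinuousOn (fun x => u x * g x) K := hu_cont.mul hgcont
  have hugint : IntegrableOn (fun x => u x * g x) Ω :=
    (hugcont.integrableOn_compact hKc).mono_set hΩK
  -- max of u
  obtain ⟨z, hzK, hzmax⟩ := hKc.exists_isMaxOn hKne hu_cont
  set M := u z with hMdef
  have hM0 : 0 ≤ M := hu_nonneg z hzK
  -- a point in Ω in the nhdsWithin filter trick
  have hpull : ∀ c : ℝ, (∃ w ∈ K, u w ≠ c) → ∃ x ∈ Ω, u x ≠ c := by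
    intro c ⟨w, hwK, hwc⟩
    have hne : (nhdsWithin w Ω).NeBot := mem_closure_iff_nhdsWithin_neBot.1 hwK
    have hev : ∀ᶠ x in nhdsWithin w K, u x ≠ c := by
      have := (hu_cont w hwK).eventually (isOpen_ne.eventually_mem (show u w ∈ {y | y ≠ c} from hwc))
      simpa using this
    have hev2 : ∀ᶠ x in nhdsWithin w Ω, u x ≠ c := (nhdsWithin_mono w hΩK) hev
    have hmem : ∀ᶠ x in nhdsWithin w Ω, x ∈ Ω := eventually_mem_nhdsWithin
    exact (hev2.and hmem).exists.imp (fun x ⟨h1, h2⟩ => ⟨h2, h1⟩)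
  -- main case argument: find c
  have hcase : θ ≤ α * F M := by
    by_contra hlt
    push_neg at hlt
    have hneg : ∀ x ∈ Ω, g x < 0 := by
      intro x hx
      have hxK := hΩK hx
      have h1 : F (u x) ≤ F M := hFmono.monotoneOn (humaps hxK) (hu_nonneg z hzK) (hzmax hxK)
      have : α * F (u x) - θ < 0 := by nlinarith
      exact mul_neg_of_neg_of_pos this (Real.exp_pos _)
    have hnn : 0 ≤ᶠ[ae (volume.restrict Ω)] (fun x => -g x) := by
      refine (ae_restrict_iff' hΩo.measurableSet).2 (Eventually.of_forall ?_)
      exact fun x hx => neg_nonneg.2 (hneg x hx).le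
    have hint : IntegrableOn (fun x => -g x) Ω := hgint.neg
    have hsupp : Ω ⊆ Function.support (fun x => -g x) := by
      intro x hx
      simp only [Function.mem_support]
      exact fun h => absurd h (by have := hneg x hx; intro h'; linarith)
    have hpos : 0 < ∫ x in Ω, -g x := by
      rw [setIntegral_pos_iff_support_of_nonneg_ae hnn hint]
      have : 0 < volume Ω := hΩo.measure_pos volume hΩne
      exact this.trans_le (measure_mono (subset_inter hsupp subset_rfl))
    rw [integral_neg, hzero] at hpos
    simp at hpos
  -- obtain c with F c = θ / α when 0 < θ, else c = 0
  obtain ⟨c, hc0, hcM, hsign⟩ :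
      ∃ c, 0 ≤ c ∧ c ∈ Icc (0:ℝ) M ∧ ∀ s, 0 ≤ s → s ≠ c → 0 < (s - c) * (α * F s - θ) := by
    rcases le_or_gt θ 0 with hθ | hθ
    · refine ⟨0, le_refl 0, ⟨le_refl 0, hM0⟩, ?_⟩
      intro s hs hsne
      have hs' : 0 < s := lt_of_le_of_ne hs (Ne.symm hsne)
      have : F 0 < F s := hFmono (mem_Ici.2 (le_refl 0)) hs hs' -- membership
      have h2 : 0 < α * F s - θ := by rw [hF0] at this; nlinarith
      have : 0 < s - 0 := by linarith
      positivity
    · have hIcc : θ / α ∈ Icc (F 0) (F M) := by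
        constructor
        · rw [hF0]; positivity
        · rw [div_le_iff₀ hα] at *; nlinarith [hcase]
      obtain ⟨c, hcmem, hFc⟩ := intermediate_value_Icc hM0 (hFcont.mono (Icc_subset_Ici_self)) hIcc
      refine ⟨c, hcmem.1, hcmem, ?_⟩
      intro s hs hsne
      have hθc : α * F c = θ := by
        rw [hFc]; field_simp
      rcases lt_or_gt_of_ne hsne with h | h
      · have : F s < F c := hFmono hs (le_trans hcmem.1 (le_refl c)) h
        have h2 : α * F s - θ < 0 := by nlinarith
        have h3 : s - c < 0 := by linarith
        exact mul_pos_of_neg_of_neg h3 h2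
      · have : F c < F s := hFmono hcmem.1 hs h
        have h2 : 0 < α * F s - θ := by nlinarith
        have h3 : 0 < s - c := by linarith
        positivity
  -- h := (u - c) * g is nonneg on Ω, positive somewhere
  set h : EuclideanSpace ℝ (Fin N) → ℝ := fun x => (u x - c) * g x with hhdef
  have key : ∀ x, 0 ≤ u x → u x ≠ c → 0 < h x := by
    intro x hx hne
    have h1 := hsign (u x) hx hne
    have h2 := Real.exp_pos (k₀ * u x)
    have h3 : 0 < ((u x - c) * (α * F (u x) - θ)) * Real.exp (k₀ * u x) := mul_pos h1 h2
    simpa [hhdef, hgdef, mul_assoc] using h3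
  have hh_nonneg : ∀ x ∈ Ω, 0 ≤ h x := by
    intro x hx
    rcases eq_or_ne (u x) c with he | hne
    · simp [hhdef, he]
    · exact (key x (hu_nonneg x (hΩK hx)) hne).le
  -- a point where u ≠ c
  obtain ⟨x₀, hx₀Ω, hx₀ne⟩ : ∃ x ∈ Ω, u x ≠ c := by
    obtain ⟨a, ha, b, hb, hab⟩ := hu_noncon
    rcases eq_or_ne (u a) c with h1 | h1
    · exact hpull c ⟨b, hb, by rw [← h1]; exact hab.symm⟩
    · exact hpull c ⟨a, ha, h1⟩
  have hx₀pos : 0 < h x₀ := key x₀ (hu_nonneg x₀ (hΩK hx₀Ω)) hx₀ne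
  -- integrability of h
  have hhcont : ContinuousOn h K := (hu_cont.sub continuousOn_const).mul hgcont
  have hhint : IntegrableOn h Ω := (hhcont.integrableOn_compact hKc).mono_set hΩK
  -- positivity of ∫ h
  have hVopen : IsOpen (Ω ∩ h ⁻¹' (Ioi 0)) :=
    (hhcont.mono hΩK).isOpen_inter_preimage hΩo isOpen_Ioi
  have hVne : (Ω ∩ h ⁻¹' (Ioi 0)).Nonempty := ⟨x₀, hx₀Ω, hx₀pos⟩
  have hintpos : 0 < ∫ x in Ω, h x := by
    rw [setIntegral_pos_iff_support_of_nonneg_ae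
      ((ae_restrict_iff' hΩo.measurableSet).2 (Eventually.of_forall hh_nonneg)) hhint]
    refine lt_of_lt_of_le (hVopen.measure_pos volume hVne) (measure_mono ?_)
    rintro x ⟨hx1, hx2⟩
    exact ⟨fun hz => absurd hz (ne_of_gt hx2), hx1⟩
  -- conclude
  have hsplit : (∫ x in Ω, h x) = (∫ x in Ω, u x * g x) - c * ∫ x in Ω, g x := by
    rw [← integral_const_mul, ← integral_sub hugint (hgint.const_mul c)]
    apply setIntegral_congr_fun hΩo.measurableSet
    intro x _
    simp [hhdef]
    ring
  rw [hsplit, hzero, mul_zero, sub_zero] at hintpos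
  calc (0:ℝ) < ∫ x in Ω, u x * g x := hintpos
    _ = ∫ x in Ω, u x * (α * F (u x) - θ) * Real.exp (k₀ * u x) := by
        apply setIntegral_congr_fun hΩo.measurableSet
        intro x _; simp [hgdef]; ring
end

section
/- The function F̃(k) := (∫_Ω F(u(x)) (1 + u(x))^{k} dx) / (∫_Ω (1 + u(x))^{k} dx) is strictly increasing with respect to k on [0, ∞). (This is the monotonicity of the weighted average of F(u) with weight 1/d(u;k) for the algebraic dispersal rate d(u;k) = (1+u)^{−k}.) -/
open MeasureTheory

/-- Strict Chebyshev/FKG-type correlation inequality for integrals. -/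
lemma chebyshev_aux {α : Type*} [MeasurableSpace α] (μ : Measure α) [SigmaFinite μ]
    (f g w : α → ℝ) (S : Set α) (hSc : μ Sᶜ = 0)
    (hw : ∀ x ∈ S, 0 < w x)
    (hfg : ∀ x ∈ S, ∀ y ∈ S, 0 ≤ (f x - f y) * (g x - g y))
    (hIw : Integrable w μ) (hIfw : Integrable (fun x => f x * w x) μ)
    (hIgw : Integrable (fun x => g x * w x) μ)
    (hIfgw : Integrable (fun x => f x * g x * w x) μ)
    (A B : Set α) (hA : A ⊆ S) (hB : B ⊆ S)
    (hApos : 0 < μ A) (hBpos : 0 < μ B)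
    (hAB : ∀ x ∈ A, ∀ y ∈ B, (f x - f y) * (g x - g y) ≠ 0) :
    (∫ x, f x * w x ∂μ) * (∫ x, g x * w x ∂μ) <
      (∫ x, f x * g x * w x ∂μ) * (∫ x, w x ∂μ) := by
  set H : α × α → ℝ := fun p =>
    (f p.1 - f p.2) * (g p.1 - g p.2) * (w p.1 * w p.2) with hH
  have hI1 : Integrable (fun p : α × α => (f p.1 * g p.1 * w p.1) * w p.2) (μ.prod μ) :=
    hIfgw.mul_prod hIw
  have hI2 : Integrable (fun p : α × α => (f p.1 * w p.1) * (g p.2 * w p.2)) (μ.prod μ) :=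
    hIfw.mul_prod hIgw
  have hI3 : Integrable (fun p : α × α => (g p.1 * w p.1) * (f p.2 * w p.2)) (μ.prod μ) :=
    hIgw.mul_prod hIfw
  have hI4 : Integrable (fun p : α × α => w p.1 * (f p.2 * g p.2 * w p.2)) (μ.prod μ) :=
    hIw.mul_prod hIfgw
  have hHE : ∀ p : α × α, H p = ((f p.1 * g p.1 * w p.1) * w p.2
      - (f p.1 * w p.1) * (g p.2 * w p.2))
      - ((g p.1 * w p.1) * (f p.2 * w p.2) - w p.1 * (f p.2 * g p.2 * w p.2)) := by
    intro p; simp only [hH]; ring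
  have hIH : Integrable H (μ.prod μ) :=
    (((hI1.sub hI2).sub (hI3.sub hI4)).congr
      (Filter.Eventually.of_forall fun p => (hHE p).symm))
  have hI12 : Integrable (fun p : α × α => (f p.1 * g p.1 * w p.1) * w p.2
      - (f p.1 * w p.1) * (g p.2 * w p.2)) (μ.prod μ) := hI1.sub hI2
  have hI34 : Integrable (fun p : α × α => (g p.1 * w p.1) * (f p.2 * w p.2)
      - w p.1 * (f p.2 * g p.2 * w p.2)) (μ.prod μ) := hI3.sub hI4
  have hval : ∫ p, H p ∂(μ.prod μ)
      = ((∫ x, f x * g x * w x ∂μ) * (∫ x, w x ∂μ)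
        - (∫ x, f x * w x ∂μ) * (∫ x, g x * w x ∂μ))
        - ((∫ x, g x * w x ∂μ) * (∫ x, f x * w x ∂μ)
        - (∫ x, w x ∂μ) * (∫ x, f x * g x * w x ∂μ)) := by
    simp only [hHE]
    rw [integral_sub hI12 hI34, integral_sub hI1 hI2, integral_sub hI3 hI4,
      integral_prod_mul (fun x => f x * g x * w x) w,
      integral_prod_mul (fun x => f x * w x) (fun x => g x * w x),
      integral_prod_mul (fun x => g x * w x) (fun x => f x * w x),
      integral_prod_mul w (fun x => f x * g x * w x)]
  have hae1 : ∀ᵐ p ∂(μ.prod μ), p.1 ∈ S := by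
    rw [MeasureTheory.ae_iff]
    have h : {p : α × α | ¬ p.1 ∈ S} = Sᶜ ×ˢ Set.univ := by
      ext p; simp
    rw [h, Measure.prod_prod, hSc, zero_mul]
  have hae2 : ∀ᵐ p ∂(μ.prod μ), p.2 ∈ S := by
    rw [MeasureTheory.ae_iff]
    have h : {p : α × α | ¬ p.2 ∈ S} = Set.univ ×ˢ Sᶜ := by
      ext p; simp
    rw [h, Measure.prod_prod, hSc, mul_zero]
  have hnonneg : 0 ≤ᵐ[μ.prod μ] H := by
    filter_upwards [hae1, hae2] with p hp1 hp2
    exact mul_nonneg (hfg _ hp1 _ hp2) (mul_nonneg (hw _ hp1).le (hw _ hp2).le)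
  have hsupp : A ×ˢ B ⊆ Function.support H := by
    rintro ⟨x, y⟩ ⟨hx, hy⟩
    exact mul_ne_zero (hAB x hx y hy)
      (ne_of_gt (mul_pos (hw x (hA hx)) (hw y (hB hy))))
  have hpos : 0 < ∫ p, H p ∂(μ.prod μ) := by
    rw [integral_pos_iff_support_of_nonneg_ae hnonneg hIH]
    calc (0:ENNReal) < μ A * μ B := ENNReal.mul_pos hApos.ne' hBpos.ne'
      _ = (μ.prod μ) (A ×ˢ B) := (Measure.prod_prod A B).symm
      _ ≤ (μ.prod μ) (Function.support H) := measure_mono hsupp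
  rw [hval] at hpos
  nlinarith [mul_comm (∫ x, g x * w x ∂μ) (∫ x, f x * w x ∂μ),
    mul_comm (∫ x, w x ∂μ) (∫ x, f x * g x * w x ∂μ)]

set_option maxHeartbeats 1000000 in
/-- `F̃(k) := (∫_Ω F(u) (1+u)^k) / (∫_Ω (1+u)^k)` is strictly
increasing on `[0, ∞)` (algebraic dispersal rate `d(u;k) = (1+u)^{-k}`). -/
theorem stmt_10 (N : ℕ) (Ω : Set (EuclideanSpace ℝ (Fin N)))
    (hΩo : IsOpen Ω) (hΩne : Ω.Nonempty) (hΩb : Bornology.IsBounded Ω)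
    (u : EuclideanSpace ℝ (Fin N) → ℝ)
    (hu_cont : ContinuousOn u (closure Ω))
    (hu_nonneg : ∀ x ∈ closure Ω, 0 ≤ u x)
    (hu_noncon : ∃ x ∈ closure Ω, ∃ y ∈ closure Ω, u x ≠ u y)
    (F : ℝ → ℝ)
    -- (H2)
    (hF_smooth : ContDiffOn ℝ 1 F (Set.Ici 0)) (hF0 : F 0 = 0)
    (hF_deriv : ∀ s ∈ Set.Ici (0:ℝ), 0 < derivWithin F (Set.Ici 0) s) :
    StrictMonoOn
      (fun k : ℝ => (∫ x in Ω, F (u x) * (1 + u x) ^ k) /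
        (∫ x in Ω, (1 + u x) ^ k))
      (Set.Ici 0) := by
  have hΩm : MeasurableSet Ω := hΩo.measurableSet
  have hcpt : IsCompact (closure Ω) := hΩb.isCompact_closure
  have hucΩ : ContinuousOn u Ω := hu_cont.mono subset_closure
  have hvolΩ : volume Ω ≠ ⊤ :=
    ne_top_of_le_ne_top hcpt.measure_lt_top.ne (measure_mono subset_closure)
  have hvolΩpos : 0 < volume Ω := hΩo.measure_pos volume hΩne
  -- integrability helper
  have hint : ∀ g : ℝ → ℝ, ContinuousOn g (Set.Ici 0) →
      IntegrableOn (fun x => g (u x)) Ω := by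
    intro g hg
    have hc : ContinuousOn (fun x => g (u x)) (closure Ω) :=
      hg.comp hu_cont (fun x hx => hu_nonneg x hx)
    exact (hc.integrableOn_compact hcpt).mono_set subset_closure
  -- continuity of weight functions
  have hWc : ∀ k : ℝ, ContinuousOn (fun s : ℝ => (1 + s) ^ k) (Set.Ici 0) := by
    intro k
    apply ContinuousOn.rpow_const (continuous_const.add continuous_id).continuousOn
    intro s hs
    have : (0:ℝ) ≤ s := hs
    left; exact (show (0:ℝ) < 1 + s by linarith).ne'
  have hFc : ContinuousOn F (Set.Ici 0) := hF_smooth.continuousOn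
  -- F strictly monotone on [0, ∞)
  have hFmono : StrictMonoOn F (Set.Ici 0) := by
    apply strictMonoOn_of_deriv_pos (convex_Ici 0) hFc
    intro x hx
    rw [interior_Ici] at hx
    have h1 : Set.Ici (0:ℝ) ∈ nhds x := Ici_mem_nhds hx
    have := hF_deriv x (Set.mem_Ici.mpr (le_of_lt hx))
    rwa [derivWithin_of_mem_nhds h1] at this
  -- positivity of the denominators
  have hDpos : ∀ k : ℝ, 0 ≤ k → 0 < ∫ x in Ω, (1 + u x) ^ k := by
    intro k hk
    have hI : IntegrableOn (fun x => (1 + u x) ^ k) Ω := hint (fun s => (1 + s) ^ k) (hWc k)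
    have h1 : ∀ x ∈ Ω, (1:ℝ) ≤ (1 + u x) ^ k := by
      intro x hx
      have h0 : 0 ≤ u x := hu_nonneg x (subset_closure hx)
      exact Real.one_le_rpow (by linarith) hk
    have hge := setIntegral_ge_of_const_le hΩm hvolΩ h1 hI
    have hpos : 0 < (volume Ω).toReal := ENNReal.toReal_pos hvolΩpos.ne' hvolΩ
    rw [smul_eq_mul, mul_one, measureReal_def] at hge
    nlinarith
  -- u is nonconstant on Ω itself
  have hnc : ∃ a ∈ Ω, ∃ b ∈ Ω, u a < u b := by
    by_contra hcon
    push_neg at hcon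
    have hconst : ∀ a ∈ Ω, ∀ b ∈ Ω, u a = u b := by
      intro a ha b hb
      exact le_antisymm (hcon b hb a ha) (hcon a ha b hb)
    obtain ⟨a₀, ha₀⟩ := hΩne
    have hclo : ∀ z ∈ closure Ω, u z = u a₀ := by
      intro z hz
      have hne : (nhdsWithin z Ω).NeBot := mem_closure_iff_nhdsWithin_neBot.mp hz
      have ht1 : Filter.Tendsto u (nhdsWithin z Ω) (nhds (u z)) :=
        (hu_cont z hz).mono_left (nhdsWithin_mono z subset_closure)
      have hev : ∀ᶠ x in nhdsWithin z Ω, u x = u a₀ := by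
        filter_upwards [self_mem_nhdsWithin] with x hx
        exact hconst x hx a₀ ha₀
      have ht2 : Filter.Tendsto u (nhdsWithin z Ω) (nhds (u a₀)) := by
        rw [Filter.tendsto_congr' hev]
        exact tendsto_const_nhds
      exact tendsto_nhds_unique ht1 ht2
    obtain ⟨x, hx, y, hy, hxy⟩ := hu_noncon
    exact hxy ((hclo x hx).trans (hclo y hy).symm)
  obtain ⟨a, ha, b, hb, hab⟩ := hnc
  -- the main strict monotonicity
  intro k₁ hk₁ k₂ hk₂ hk
  simp only
  rw [div_lt_div_iff₀ (hDpos k₁ hk₁) (hDpos k₂ hk₂)]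
  set δ := k₂ - k₁ with hδdef
  have hδ : 0 < δ := sub_pos.mpr hk
  set t := (u a + u b) / 2 with htdef
  have hat : u a < t := by rw [htdef]; linarith
  have htb : t < u b := by rw [htdef]; linarith
  set A := Ω ∩ u ⁻¹' (Set.Iio t) with hAdef
  set B := Ω ∩ u ⁻¹' (Set.Ioi t) with hBdef
  have hAo : IsOpen A := hucΩ.isOpen_inter_preimage hΩo isOpen_Iio
  have hBo : IsOpen B := hucΩ.isOpen_inter_preimage hΩo isOpen_Ioi
  have hAsub : A ⊆ Ω := Set.inter_subset_left
  have hBsub : B ⊆ Ω := Set.inter_subset_left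
  set μ := volume.restrict Ω with hμdef
  have hμA : 0 < μ A := by
    rw [hμdef, Measure.restrict_apply hAo.measurableSet,
      Set.inter_eq_left.mpr hAsub]
    exact hAo.measure_pos volume ⟨a, ha, hat⟩
  have hμB : 0 < μ B := by
    rw [hμdef, Measure.restrict_apply hBo.measurableSet,
      Set.inter_eq_left.mpr hBsub]
    exact hBo.measure_pos volume ⟨b, hb, htb⟩
  have hμSc : μ Ωᶜ = 0 := by
    rw [hμdef, Measure.restrict_apply (hΩm.compl), Set.compl_inter_self]
    simp
  -- apply the correlation inequality
  have key := chebyshev_aux μ (fun x => F (u x)) (fun x => (1 + u x) ^ δ)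
      (fun x => (1 + u x) ^ k₁) Ω hμSc
      (fun x hx => by
        have h0 : 0 ≤ u x := hu_nonneg x (subset_closure hx)
        positivity)
      (fun x hx y hy => by
        have h0x : 0 ≤ u x := hu_nonneg x (subset_closure hx)
        have h0y : 0 ≤ u y := hu_nonneg y (subset_closure hy)
        rcases le_total (u x) (u y) with h | h
        · have h1 : F (u x) ≤ F (u y) := hFmono.monotoneOn h0x h0y h
          have h2 : (1 + u x) ^ δ ≤ (1 + u y) ^ δ :=
            Real.rpow_le_rpow (by linarith) (by linarith) hδ.le
          nlinarith [mul_nonneg (sub_nonneg.mpr h1) (sub_nonneg.mpr h2)]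
        · have h1 : F (u y) ≤ F (u x) := hFmono.monotoneOn h0y h0x h
          have h2 : (1 + u y) ^ δ ≤ (1 + u x) ^ δ :=
            Real.rpow_le_rpow (by linarith) (by linarith) hδ.le
          exact mul_nonneg (by linarith) (by linarith))
      (hint (fun s => (1 + s) ^ k₁) (hWc k₁))
      (hint (fun s => F s * (1 + s) ^ k₁) (hFc.mul (hWc k₁)))
      (hint (fun s => (1 + s) ^ δ * (1 + s) ^ k₁) ((hWc δ).mul (hWc k₁)))
      (hint (fun s => F s * (1 + s) ^ δ * (1 + s) ^ k₁) ((hFc.mul (hWc δ)).mul (hWc k₁)))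
      A B hAsub hBsub hμA hμB
      (fun x hx y hy => by
        have h0x : 0 ≤ u x := hu_nonneg x (subset_closure (hAsub hx))
        have h0y : 0 ≤ u y := hu_nonneg y (subset_closure (hBsub hy))
        have hxy : u x < u y := lt_trans hx.2 hy.2
        have h1 : F (u x) < F (u y) := hFmono h0x h0y hxy
        have h2 : (1 + u x) ^ δ < (1 + u y) ^ δ :=
          Real.rpow_lt_rpow (by linarith) (by linarith) hδ
        exact ne_of_gt (mul_pos_of_neg_of_neg (by linarith) (by linarith)))
  -- rewrite the weighted integrals
  have hexp : ∀ x ∈ Ω, (1 + u x) ^ δ * (1 + u x) ^ k₁ = (1 + u x) ^ k₂ := by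
    intro x hx
    have h0 : 0 ≤ u x := hu_nonneg x (subset_closure hx)
    rw [← Real.rpow_add (by linarith : (0:ℝ) < 1 + u x)]
    congr 1
    rw [hδdef]; ring
  have e₁ : (∫ x, (1 + u x) ^ δ * (1 + u x) ^ k₁ ∂μ) = ∫ x in Ω, (1 + u x) ^ k₂ :=
    setIntegral_congr_fun hΩm (fun x hx => hexp x hx)
  have e₂ : (∫ x, F (u x) * (1 + u x) ^ δ * (1 + u x) ^ k₁ ∂μ)
      = ∫ x in Ω, F (u x) * (1 + u x) ^ k₂ := by
    apply setIntegral_congr_fun hΩm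
    intro x hx
    show F (u x) * (1 + u x) ^ δ * (1 + u x) ^ k₁ = F (u x) * (1 + u x) ^ k₂
    rw [mul_assoc, hexp x hx]
  rw [e₁, e₂] at key
  exact key
end

section
/- Suppose φ : [0,L] → ℝ is C² and satisfies μ φ''(x) + (α F(ũ(x)) − θ) e^{k ũ(x)} φ(x) = 0 for all x ∈ [0,L], with φ'(0) = φ'(L) = 0. Then ∫₀^L (α F(ũ(x)) − θ) ũ(x) e^{k ũ(x)} φ(x)² dx = μ ∫₀^L [ ũ(x) (φ'(x))² + φ(x) φ'(x) ũ'(x) ] dx. -/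
/-- if `μ φ'' + (α F(ũ) - θ) e^{k ũ} φ = 0` on `[0,L]` with
`φ'(0) = φ'(L) = 0`, then
`∫₀^L (α F(ũ) - θ) ũ e^{k ũ} φ² = μ ∫₀^L (ũ (φ')² + φ φ' ũ')`. -/
theorem stmt_11 (L μ α k θ : ℝ) (hL : 0 < L) (hμ : 0 < μ) (hα : 0 < α) (hk : 0 ≤ k)
    (F tu φ : ℝ → ℝ)
    -- (H2)
    (hF_smooth : ContDiffOn ℝ 1 F (Set.Ici 0)) (hF0 : F 0 = 0)
    (hF_deriv : ∀ s ∈ Set.Ici (0:ℝ), 0 < derivWithin F (Set.Ici 0) s)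
    -- ũ is C¹ and nonnegative on [0,L]
    (htu_smooth : ContDiffOn ℝ 1 tu (Set.Icc 0 L))
    (htu_nonneg : ∀ x ∈ Set.Icc 0 L, 0 ≤ tu x)
    -- φ is C² and solves the equation with Neumann boundary conditions
    (hφ_smooth : ContDiffOn ℝ 2 φ (Set.Icc 0 L))
    (hφ_eq : ∀ x ∈ Set.Icc 0 L,
      μ * iteratedDerivWithin 2 φ (Set.Icc 0 L) x
        + (α * F (tu x) - θ) * Real.exp (k * tu x) * φ x = 0)
    (hφ_bc0 : derivWithin φ (Set.Icc 0 L) 0 = 0)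
    (hφ_bcL : derivWithin φ (Set.Icc 0 L) L = 0) :
    ∫ x in (0:ℝ)..L, (α * F (tu x) - θ) * tu x * Real.exp (k * tu x) * φ x ^ 2
      = μ * ∫ x in (0:ℝ)..L,
          (tu x * derivWithin φ (Set.Icc 0 L) x ^ 2
            + φ x * derivWithin φ (Set.Icc 0 L) x * derivWithin tu (Set.Icc 0 L) x) := by
  have hU : UniqueDiffOn ℝ (Set.Icc (0:ℝ) L) := uniqueDiffOn_Icc hL
  set s : Set ℝ := Set.Icc 0 L with hs
  set p : ℝ → ℝ := derivWithin φ s with hp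
  set q : ℝ → ℝ := derivWithin tu s with hq
  set r : ℝ → ℝ := iteratedDerivWithin 2 φ s with hr
  have huIcc : Set.uIcc (0:ℝ) L = s := Set.uIcc_of_le hL.le
  -- continuity facts
  have hφc : ContinuousOn φ s := hφ_smooth.continuousOn
  have hpsm : ContDiffOn ℝ 1 p s := hφ_smooth.derivWithin hU (by norm_num)
  have hpc : ContinuousOn p s := hpsm.continuousOn
  have hrc : ContinuousOn r s :=
    hφ_smooth.continuousOn_iteratedDerivWithin le_rfl hU
  have htuc : ContinuousOn tu s := htu_smooth.continuousOn
  have hq0 : ContDiffOn ℝ 0 q s := htu_smooth.derivWithin hU (by norm_num)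
  have hqc : ContinuousOn q s := hq0.continuousOn
  -- derivative facts
  have hdφ : ∀ x ∈ s, HasDerivWithinAt φ (p x) s x := fun x hx =>
    (hφ_smooth.differentiableOn (by norm_num) x hx).hasDerivWithinAt
  have hdp : ∀ x ∈ s, HasDerivWithinAt p (r x) s x := by
    intro x hx
    have heqon : Set.EqOn (iteratedDerivWithin 1 φ s) p s := fun y hy => by
      rw [iteratedDerivWithin_one]
    have h1 : r x = derivWithin p s x := by
      rw [hr]
      show iteratedDerivWithin (1+1) φ s x = _
      rw [iteratedDerivWithin_succ, derivWithin_congr heqon (heqon hx)]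
    rw [h1]
    exact (hpsm.differentiableOn one_ne_zero x hx).hasDerivWithinAt
  have hdtu : ∀ x ∈ s, HasDerivWithinAt tu (q x) s x := fun x hx =>
    (htu_smooth.differentiableOn one_ne_zero x hx).hasDerivWithinAt
  -- product rule for G = tu * (φ * p)
  set G : ℝ → ℝ := fun x => tu x * (φ x * p x) with hG
  set g : ℝ → ℝ := fun x => q x * (φ x * p x) + tu x * (p x * p x + φ x * r x) with hg
  have hdG : ∀ x ∈ s, HasDerivWithinAt G (g x) s x := fun x hx =>
    (hdtu x hx).mul ((hdφ x hx).mul (hdp x hx))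
  have hGc : ContinuousOn G s := htuc.mul (hφc.mul hpc)
  have hgc : ContinuousOn g s :=
    (hqc.mul (hφc.mul hpc)).add (htuc.mul ((hpc.mul hpc).add (hφc.mul hrc)))
  have hgc' : ContinuousOn g (Set.uIcc 0 L) := by rw [huIcc]; exact hgc
  have hgint : IntervalIntegrable g MeasureTheory.volume 0 L :=
    hgc'.intervalIntegrable
  have hzero : ∫ x in (0:ℝ)..L, g x = 0 := by
    have := intervalIntegral.integral_eq_sub_of_hasDeriv_right_of_le hL.le hGc
      (fun x hx => ((hdG x (Set.Ioo_subset_Icc_self hx)).hasDerivAt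
        (Icc_mem_nhds hx.1 hx.2)).hasDerivWithinAt) hgint
    rw [this]
    show tu L * (φ L * p L) - tu 0 * (φ 0 * p 0) = 0
    rw [hφ_bc0, hφ_bcL]
    ring
  -- rewrite LHS using the ODE
  have hLHS : ∫ x in (0:ℝ)..L, (α * F (tu x) - θ) * tu x * Real.exp (k * tu x) * φ x ^ 2
      = ∫ x in (0:ℝ)..L, (-(μ * (tu x * (φ x * r x)))) := by
    apply intervalIntegral.integral_congr
    intro x hx
    rw [huIcc] at hx
    have := hφ_eq x hx
    simp only
    linear_combination (tu x * φ x) * this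
  -- rewrite RHS integral
  have hint1c : ContinuousOn (fun x => tu x * (φ x * r x)) (Set.uIcc 0 L) := by
    rw [huIcc]; exact htuc.mul (hφc.mul hrc)
  have hint1 : IntervalIntegrable (fun x => tu x * (φ x * r x)) MeasureTheory.volume 0 L :=
    hint1c.intervalIntegrable
  have hRHS : ∫ x in (0:ℝ)..L,
      (tu x * p x ^ 2 + φ x * p x * q x)
      = - ∫ x in (0:ℝ)..L, tu x * (φ x * r x) := by
    have heq : (fun x => tu x * p x ^ 2 + φ x * p x * q x)
        = fun x => g x - tu x * (φ x * r x) := by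
      funext x; rw [hg]; ring
    rw [heq, intervalIntegral.integral_sub hgint hint1, hzero, zero_sub]
  rw [hLHS, hRHS, intervalIntegral.integral_neg]
  rw [intervalIntegral.integral_const_mul]
  ring
end

section
/- Let μ > 0, let r : [0,L] → ℝ be continuous, and suppose there exists x* ∈ (0,L) such that r(x) < 0 for x ∈ [0, x*), r(x*) = 0, and r(x) > 0 for x ∈ (x*, L]. If φ : [0,L] → ℝ is C² with φ > 0 on [0,L], satisfies μ φ'' + r φ = 0 on [0,L], and φ'(0) = φ'(L) = 0, then φ'(x) > 0 for all x ∈ (0,L). -/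
/-- let `r` be continuous on `[0,L]` changing sign exactly once
from negative to positive at `x* ∈ (0,L)`. If `φ > 0` is C², satisfies
`μ φ'' + r φ = 0` on `[0,L]` and `φ'(0) = φ'(L) = 0`, then `φ' > 0` on `(0,L)`. -/
theorem stmt_13 (L μ : ℝ) (hL : 0 < L) (hμ : 0 < μ) (r φ : ℝ → ℝ)
    (hr_cont : ContinuousOn r (Set.Icc 0 L))
    (xstar : ℝ) (hx : xstar ∈ Set.Ioo 0 L)
    (hr_neg : ∀ x ∈ Set.Ico 0 xstar, r x < 0)
    (hr_zero : r xstar = 0)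
    (hr_pos : ∀ x ∈ Set.Ioc xstar L, 0 < r x)
    (hφ_smooth : ContDiffOn ℝ 2 φ (Set.Icc 0 L))
    (hφ_pos : ∀ x ∈ Set.Icc 0 L, 0 < φ x)
    (hφ_eq : ∀ x ∈ Set.Icc 0 L,
      μ * iteratedDerivWithin 2 φ (Set.Icc 0 L) x + r x * φ x = 0)
    (hφ_bc0 : derivWithin φ (Set.Icc 0 L) 0 = 0)
    (hφ_bcL : derivWithin φ (Set.Icc 0 L) L = 0) :
    ∀ x ∈ Set.Ioo 0 L, 0 < derivWithin φ (Set.Icc 0 L) x := by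
  set s := Set.Icc (0:ℝ) L with hsdef
  have hs : UniqueDiffOn ℝ s := uniqueDiffOn_Icc hL
  set ψ : ℝ → ℝ := derivWithin φ s with hψdef
  have hψ_cd : ContDiffOn ℝ 1 ψ s := hφ_smooth.derivWithin hs (by norm_num)
  have hψ_cont : ContinuousOn ψ s := hψ_cd.continuousOn
  -- on interior points, deriv ψ x = iteratedDerivWithin 2 φ s x
  have hderiv : ∀ x ∈ Set.Ioo 0 L, deriv ψ x = iteratedDerivWithin 2 φ s x := by
    intro x hxm
    have hxs : x ∈ s := Set.mem_Icc.2 ⟨le_of_lt hxm.1, le_of_lt hxm.2⟩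
    have hnhds : s ∈ nhds x := by
      rw [hsdef]
      exact Icc_mem_nhds hxm.1 hxm.2
    have hdw : DifferentiableWithinAt ℝ ψ s x :=
      hψ_cd.differentiableOn (by norm_num) x hxs
    have h1 : deriv ψ x = derivWithin ψ s x :=
      (derivWithin_of_mem_nhds hnhds).symm
    have h2 : iteratedDerivWithin 2 φ s x
        = derivWithin (iteratedDerivWithin 1 φ s) s x := by
      rw [iteratedDerivWithin_succ]
    have h3 : derivWithin (iteratedDerivWithin 1 φ s) s x = derivWithin ψ s x := by
      apply derivWithin_congr
      · intro y hy
        exact congrFun iteratedDerivWithin_one y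
      · exact congrFun iteratedDerivWithin_one x
    rw [h1, h2, h3]
  have hderiv_pos : ∀ x ∈ Set.Ioo 0 xstar, 0 < deriv ψ x := by
    intro x hxm
    have hxIoo : x ∈ Set.Ioo 0 L := ⟨hxm.1, lt_trans hxm.2 hx.2⟩
    have hxs : x ∈ s := Set.mem_Icc.2 ⟨le_of_lt hxIoo.1, le_of_lt hxIoo.2⟩
    have heq := hφ_eq x hxs
    have hrx : r x < 0 := hr_neg x ⟨le_of_lt hxm.1, hxm.2⟩
    have hφx : 0 < φ x := hφ_pos x hxs
    rw [hderiv x hxIoo]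
    nlinarith [mul_pos (neg_pos.2 hrx) hφx]
  have hderiv_neg : ∀ x ∈ Set.Ioo xstar L, deriv ψ x < 0 := by
    intro x hxm
    have hxIoo : x ∈ Set.Ioo 0 L := ⟨lt_trans hx.1 hxm.1, hxm.2⟩
    have hxs : x ∈ s := Set.mem_Icc.2 ⟨le_of_lt hxIoo.1, le_of_lt hxIoo.2⟩
    have heq := hφ_eq x hxs
    have hrx : 0 < r x := hr_pos x ⟨hxm.1, le_of_lt hxm.2⟩
    have hφx : 0 < φ x := hφ_pos x hxs
    rw [hderiv x hxIoo]
    nlinarith [mul_pos hrx hφx]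
  have hmono : StrictMonoOn ψ (Set.Icc 0 xstar) := by
    apply strictMonoOn_of_deriv_pos (convex_Icc 0 xstar)
    · exact hψ_cont.mono (Set.Icc_subset_Icc le_rfl (le_of_lt hx.2))
    · intro x hxm
      rw [interior_Icc] at hxm
      exact hderiv_pos x hxm
  have hanti : StrictAntiOn ψ (Set.Icc xstar L) := by
    apply strictAntiOn_of_deriv_neg (convex_Icc xstar L)
    · exact hψ_cont.mono (Set.Icc_subset_Icc (le_of_lt hx.1) le_rfl)
    · intro x hxm
      rw [interior_Icc] at hxm
      exact hderiv_neg x hxm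
  intro x hxm
  rcases le_or_gt x xstar with hle | hgt
  · have := hmono (Set.mem_Icc.2 ⟨le_rfl, le_of_lt hx.1⟩)
      (Set.mem_Icc.2 ⟨le_of_lt hxm.1, hle⟩) hxm.1
    rw [hφ_bc0] at this
    exact this
  · have := hanti (Set.mem_Icc.2 ⟨le_of_lt hgt, le_of_lt hxm.2⟩)
      (Set.mem_Icc.2 ⟨le_of_lt hx.2, le_rfl⟩) hxm.2
    rw [hφ_bcL] at this
    exact this
end

section
/- Assume (H1), (H2), (H3), fix ε, μ, α, θ > 0, let ũ be a positive C² solution of the logistic problem, and let (u, w) be a positive solution of the steady-state system. Then: (i) u(x) < ũ(x) ≤ max_{[0,L]} m for all x ∈ [0,L]; (ii) ∫₀^L θ w(x)/d(u(x)) dx = α ∫₀^L u(x)(m(x) − u(x)) dx; and (iii) ∫₀^L w(x) dx < α d(0) (max_{[0,L]} m)² L / (4θ). -/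
open Set intervalIntegral Topology Filter

section infra

variable {L : ℝ} {f : ℝ → ℝ}

lemma contOn_d1 (hL : 0 < L) (hf : ContDiffOn ℝ 2 f (Icc 0 L)) :
    ContinuousOn (derivWithin f (Icc 0 L)) (Icc 0 L) :=
  hf.continuousOn_derivWithin (uniqueDiffOn_Icc hL) (by norm_num)

lemma contOn_d2 (hL : 0 < L) (hf : ContDiffOn ℝ 2 f (Icc 0 L)) :
    ContinuousOn (iteratedDerivWithin 2 f (Icc 0 L)) (Icc 0 L) :=
  hf.continuousOn_iteratedDerivWithin (by norm_num) (uniqueDiffOn_Icc hL)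

/-- the first derivative has the second derivative as derivative, within the set -/
lemma hasDeriv_d1 (hL : 0 < L) (hf : ContDiffOn ℝ 2 f (Icc 0 L)) {x : ℝ} (hx : x ∈ Icc 0 L) :
    HasDerivWithinAt (derivWithin f (Icc 0 L)) (iteratedDerivWithin 2 f (Icc 0 L) x)
      (Icc 0 L) x := by
  have hu := uniqueDiffOn_Icc hL
  have h1 : ContDiffOn ℝ 1 (derivWithin f (Icc 0 L)) (Icc 0 L) :=
    hf.derivWithin hu (by norm_num)
  have h2 := (h1.differentiableOn (by norm_num) x hx).hasDerivWithinAt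
  have : iteratedDerivWithin 2 f (Icc 0 L) x
      = derivWithin (derivWithin f (Icc 0 L)) (Icc 0 L) x := by
    have h21 : iteratedDerivWithin 2 f (Icc 0 L) x
        = derivWithin (iteratedDerivWithin 1 f (Icc 0 L)) (Icc 0 L) x :=
      congrFun (iteratedDerivWithin_succ (n := 1) (f := f) (s := Icc 0 L)) x
    rw [h21]
    refine derivWithin_congr (fun y hy => congrFun iteratedDerivWithin_one y)
      (congrFun iteratedDerivWithin_one x)
  rw [this]; exact h2

lemma hasDerivAt_d1 (hL : 0 < L) (hf : ContDiffOn ℝ 2 f (Icc 0 L)) {x : ℝ} (hx : x ∈ Ioo 0 L) :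
    HasDerivAt (derivWithin f (Icc 0 L)) (iteratedDerivWithin 2 f (Icc 0 L) x) x :=
  (hasDeriv_d1 hL hf (Ioo_subset_Icc_self hx)).hasDerivAt (Icc_mem_nhds hx.1 hx.2)

lemma hasDerivAt_self (hL : 0 < L) (hf : ContDiffOn ℝ 2 f (Icc 0 L)) {x : ℝ} (hx : x ∈ Ioo 0 L) :
    HasDerivAt f (derivWithin f (Icc 0 L) x) x := by
  have h2 := ((hf.differentiableOn (by norm_num)) x
    (Ioo_subset_Icc_self hx)).hasDerivWithinAt
  exact h2.hasDerivAt (Icc_mem_nhds hx.1 hx.2)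

/-- FTC for the second derivative -/
lemma integral_d2 (hL : 0 < L) (hf : ContDiffOn ℝ 2 f (Icc 0 L)) :
    ∫ x in (0:ℝ)..L, iteratedDerivWithin 2 f (Icc 0 L) x
      = derivWithin f (Icc 0 L) L - derivWithin f (Icc 0 L) 0 := by
  refine integral_eq_sub_of_hasDeriv_right_of_le hL.le (contOn_d1 hL hf)
    (fun x hx => ((hasDerivAt_d1 hL hf hx).hasDerivWithinAt)) ?_
  exact (contOn_d2 hL hf).intervalIntegrable_of_Icc hL.le

/-- pushing up to the right: if `f' x0 = 0` and `f'' > 0` on `[x0, b]` then `f x0 < f b`. -/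
lemma push_right (hL : 0 < L) (hf : ContDiffOn ℝ 2 f (Icc 0 L)) {x0 b : ℝ}
    (hx0 : x0 ∈ Icc 0 L) (hb : b ∈ Icc 0 L) (hx0b : x0 < b)
    (hd0 : derivWithin f (Icc 0 L) x0 = 0)
    (hpos : ∀ x ∈ Icc x0 b, 0 < iteratedDerivWithin 2 f (Icc 0 L) x) :
    f x0 < f b := by
  have hsub : Icc x0 b ⊆ Icc 0 L := Icc_subset_Icc hx0.1 hb.2
  have hoo : Ioo x0 b ⊆ Ioo 0 L := Ioo_subset_Ioo hx0.1 hb.2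
  -- f' strictly monotone on [x0,b]
  have hmono : StrictMonoOn (derivWithin f (Icc 0 L)) (Icc x0 b) := by
    refine strictMonoOn_of_deriv_pos (convex_Icc _ _)
      ((contOn_d1 hL hf).mono hsub) (fun x hx => ?_)
    rw [interior_Icc] at hx
    rw [(hasDerivAt_d1 hL hf (hoo hx)).deriv]
    exact hpos x (Ioo_subset_Icc_self hx)
  have hderivpos : ∀ x ∈ Ioo x0 b, 0 < deriv f x := by
    intro x hx
    rw [(hasDerivAt_self hL hf (hoo hx)).deriv]
    have h := hmono (left_mem_Icc.2 hx0b.le) (Ioo_subset_Icc_self hx) hx.1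
    rw [hd0] at h; exact h
  have : StrictMonoOn f (Icc x0 b) := by
    refine strictMonoOn_of_deriv_pos (convex_Icc _ _)
      (hf.continuousOn.mono hsub) (fun x hx => ?_)
    rw [interior_Icc] at hx; exact hderivpos x hx
  exact this (left_mem_Icc.2 hx0b.le) (right_mem_Icc.2 hx0b.le) hx0b

/-- pushing up to the left: if `f' x0 = 0` and `f'' > 0` on `[a, x0]` then `f x0 < f a`. -/
lemma push_left (hL : 0 < L) (hf : ContDiffOn ℝ 2 f (Icc 0 L)) {x0 a : ℝ}
    (hx0 : x0 ∈ Icc 0 L) (ha : a ∈ Icc 0 L) (hax0 : a < x0)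
    (hd0 : derivWithin f (Icc 0 L) x0 = 0)
    (hpos : ∀ x ∈ Icc a x0, 0 < iteratedDerivWithin 2 f (Icc 0 L) x) :
    f x0 < f a := by
  have hsub : Icc a x0 ⊆ Icc 0 L := Icc_subset_Icc ha.1 hx0.2
  have hoo : Ioo a x0 ⊆ Ioo 0 L := Ioo_subset_Ioo ha.1 hx0.2
  have hmono : StrictMonoOn (derivWithin f (Icc 0 L)) (Icc a x0) := by
    refine strictMonoOn_of_deriv_pos (convex_Icc _ _)
      ((contOn_d1 hL hf).mono hsub) (fun x hx => ?_)
    rw [interior_Icc] at hx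
    rw [(hasDerivAt_d1 hL hf (hoo hx)).deriv]
    exact hpos x (Ioo_subset_Icc_self hx)
  have hderivneg : ∀ x ∈ Ioo a x0, deriv f x < 0 := by
    intro x hx
    rw [(hasDerivAt_self hL hf (hoo hx)).deriv]
    have h := hmono (Ioo_subset_Icc_self hx) (right_mem_Icc.2 hax0.le) hx.2
    rw [hd0] at h; exact h
  have : StrictAntiOn f (Icc a x0) := by
    refine strictAntiOn_of_deriv_neg (convex_Icc _ _)
      (hf.continuousOn.mono hsub) (fun x hx => ?_)
    rw [interior_Icc] at hx; exact hderivneg x hx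
  exact this (left_mem_Icc.2 hax0.le) (right_mem_Icc.2 hax0.le) hax0

end infra

section slopes

lemma deriv_nonneg_of_right {φ : ℝ → ℝ} {a b c : ℝ} (hab : a < b)
    (hd : HasDerivAt φ c a) (h0 : φ a = 0) (hnn : ∀ x ∈ Ioo a b, 0 ≤ φ x) : 0 ≤ c := by
  have hs : Filter.Tendsto (slope φ a) (𝓝[>] a) (𝓝 c) :=
    (hasDerivAt_iff_tendsto_slope.1 hd).mono_left
      (nhdsWithin_mono a (fun x hx => ne_of_gt hx))
  refine ge_of_tendsto hs ?_
  filter_upwards [Ioo_mem_nhdsGT_of_mem ⟨le_refl a, hab⟩] with x hx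
  rw [slope_def_field, h0, sub_zero]
  exact div_nonneg (hnn x hx) (sub_nonneg.2 hx.1.le)

lemma deriv_nonpos_of_left {φ : ℝ → ℝ} {a b c : ℝ} (hab : a < b)
    (hd : HasDerivAt φ c b) (h0 : φ b = 0) (hnn : ∀ x ∈ Ioo a b, 0 ≤ φ x) : c ≤ 0 := by
  have hs : Filter.Tendsto (slope φ b) (𝓝[<] b) (𝓝 c) :=
    (hasDerivAt_iff_tendsto_slope.1 hd).mono_left
      (nhdsWithin_mono b (fun x hx => ne_of_lt hx))
  refine le_of_tendsto hs ?_
  filter_upwards [Ioo_mem_nhdsLT_of_mem ⟨hab, le_refl b⟩] with x hx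
  rw [slope_def_field, h0, sub_zero]
  exact div_nonpos_of_nonneg_of_nonpos (hnn x hx) (sub_nonpos.2 hx.2.le)

end slopes

section pushneg

variable {L : ℝ} {f : ℝ → ℝ}

/-- if `f' x0 = 0` and `f'' < 0` on `[x0, b]` then `f b < f x0`. -/
lemma push_right_neg (hL : 0 < L) (hf : ContDiffOn ℝ 2 f (Icc 0 L)) {x0 b : ℝ}
    (hx0 : x0 ∈ Icc 0 L) (hb : b ∈ Icc 0 L) (hx0b : x0 < b)
    (hd0 : derivWithin f (Icc 0 L) x0 = 0)
    (hneg : ∀ x ∈ Icc x0 b, iteratedDerivWithin 2 f (Icc 0 L) x < 0) :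
    f b < f x0 := by
  have hu := uniqueDiffOn_Icc hL
  have key := push_right hL hf.neg hx0 hb hx0b ?_ ?_
  · simpa using key
  · have : derivWithin (fun y => -f y) (Icc 0 L) x0 = -derivWithin f (Icc 0 L) x0 :=
      derivWithin.neg
    rw [this, hd0, neg_zero]
  · intro x hx
    have hxI : x ∈ Icc 0 L := Icc_subset_Icc hx0.1 hb.2 hx
    have : iteratedDerivWithin 2 (fun z => -f z) (Icc 0 L) x
        = -iteratedDerivWithin 2 f (Icc 0 L) x := iteratedDerivWithin_fun_neg f
    rw [this]
    linarith [hneg x hx]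

lemma push_left_neg (hL : 0 < L) (hf : ContDiffOn ℝ 2 f (Icc 0 L)) {x0 a : ℝ}
    (hx0 : x0 ∈ Icc 0 L) (ha : a ∈ Icc 0 L) (hax0 : a < x0)
    (hd0 : derivWithin f (Icc 0 L) x0 = 0)
    (hneg : ∀ x ∈ Icc a x0, iteratedDerivWithin 2 f (Icc 0 L) x < 0) :
    f a < f x0 := by
  have hu := uniqueDiffOn_Icc hL
  have key := push_left hL hf.neg hx0 ha hax0 ?_ ?_
  · simpa using key
  · have : derivWithin (fun y => -f y) (Icc 0 L) x0 = -derivWithin f (Icc 0 L) x0 :=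
      derivWithin.neg
    rw [this, hd0, neg_zero]
  · intro x hx
    have hxI : x ∈ Icc 0 L := Icc_subset_Icc ha.1 hx0.2 hx
    have : iteratedDerivWithin 2 (fun z => -f z) (Icc 0 L) x
        = -iteratedDerivWithin 2 f (Icc 0 L) x := iteratedDerivWithin_fun_neg f
    rw [this]
    linarith [hneg x hx]

end pushneg

section supbound

variable {L ε : ℝ} {m tu : ℝ → ℝ}

lemma derivWithin_Icc_eq_deriv {f : ℝ → ℝ} {L x : ℝ} (hx : x ∈ Ioo 0 L) :
    derivWithin f (Icc 0 L) x = deriv f x :=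
  derivWithin_of_mem_nhds (Icc_mem_nhds hx.1 hx.2)

lemma logistic_le_sup (hL : 0 < L) (hε : 0 < ε)
    (hm_cont : ContinuousOn m (Icc 0 L))
    (htu_cd : ContDiffOn ℝ 2 tu (Icc 0 L))
    (htu_pos : ∀ x ∈ Icc 0 L, 0 < tu x)
    (htu_eq : ∀ x ∈ Icc 0 L,
      ε * iteratedDerivWithin 2 tu (Icc 0 L) x + tu x * (m x - tu x) = 0)
    (hN0 : derivWithin tu (Icc 0 L) 0 = 0) (hNL : derivWithin tu (Icc 0 L) L = 0) :
    ∀ x ∈ Icc 0 L, tu x ≤ sSup (m '' Icc 0 L) := by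
  set M := sSup (m '' Icc 0 L) with hM
  have hmle : ∀ x ∈ Icc 0 L, m x ≤ M := fun x hx =>
    le_csSup (isCompact_Icc.image_of_continuousOn hm_cont).bddAbove ⟨x, hx, rfl⟩
  by_contra hcon
  push_neg at hcon
  obtain ⟨y, hyI, hy⟩ := hcon
  obtain ⟨x0, hx0I, hmax⟩ := isCompact_Icc.exists_isMaxOn (nonempty_Icc.2 hL.le)
    htu_cd.continuousOn
  have hMlt : M < tu x0 := lt_of_lt_of_le hy (hmax hyI)
  -- neighborhood where tu > M
  have hev : {z | tu z ∈ Ioi M} ∈ 𝓝[Icc 0 L] x0 :=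
    (htu_cd.continuousOn x0 hx0I) (Ioi_mem_nhds hMlt)
  rw [Metric.mem_nhdsWithin_iff] at hev
  obtain ⟨δ, hδ, hball⟩ := hev
  -- second derivative positive where tu > M
  have hd2 : ∀ x ∈ Icc 0 L, M < tu x → 0 < iteratedDerivWithin 2 tu (Icc 0 L) x := by
    intro x hx hMx
    have heq := htu_eq x hx
    have h1 : iteratedDerivWithin 2 tu (Icc 0 L) x = tu x * (tu x - m x) / ε := by
      field_simp at heq ⊢; linarith
    rw [h1]
    have := hmle x hx
    have := htu_pos x hx
    have : 0 < tu x * (tu x - m x) := by nlinarith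
    positivity
  rcases lt_or_eq_of_le hx0I.2 with hx0L | hx0L
  · -- x0 < L : push right
    set b := min L (x0 + δ / 2) with hb
    have hx0b : x0 < b := lt_min hx0L (by linarith)
    have hbI : b ∈ Icc 0 L := ⟨le_trans hx0I.1 hx0b.le, min_le_left _ _⟩
    have hIcc : ∀ x ∈ Icc x0 b, M < tu x := by
      intro x hx
      have hxI : x ∈ Icc 0 L := ⟨le_trans hx0I.1 hx.1, le_trans hx.2 (min_le_left _ _)⟩
      refine hball ⟨?_, hxI⟩
      rw [Metric.mem_ball, Real.dist_eq, abs_lt]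
      constructor
      · linarith [hx.1]
      · have : x ≤ x0 + δ / 2 := le_trans hx.2 (min_le_right _ _)
        linarith
    have hd0 : derivWithin tu (Icc 0 L) x0 = 0 := by
      rcases eq_or_lt_of_le hx0I.1 with h0 | h0
      · rw [← h0]; exact hN0
      · rw [derivWithin_Icc_eq_deriv ⟨h0, hx0L⟩]
        exact (hmax.isLocalMax (Icc_mem_nhds h0 hx0L)).deriv_eq_zero
    have := push_right hL htu_cd hx0I hbI hx0b hd0 (fun x hx =>
      hd2 x (⟨le_trans hx0I.1 hx.1, le_trans hx.2 (min_le_left _ _)⟩) (hIcc x hx))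
    exact absurd (hmax hbI) (not_le.2 this)
  · -- x0 = L : push left
    set a := max 0 (L - δ / 2) with ha
    have hax0 : a < x0 := by rw [hx0L]; exact max_lt hL (by linarith)
    have haI : a ∈ Icc 0 L := ⟨le_max_left _ _, by rw [← hx0L] at *; exact hax0.le⟩
    have hIcc : ∀ x ∈ Icc a x0, M < tu x := by
      intro x hx
      have hxI : x ∈ Icc 0 L := ⟨le_trans (le_max_left _ _) hx.1, hx.2.trans hx0I.2⟩
      refine hball ⟨?_, hxI⟩
      rw [Metric.mem_ball, Real.dist_eq, abs_lt]
      have h1 : L - δ / 2 ≤ x := le_trans (le_max_right _ _) hx.1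
      constructor
      · rw [hx0L] at *; linarith
      · rw [hx0L] at *; linarith [hx.2]
    have hd0 : derivWithin tu (Icc 0 L) x0 = 0 := by rw [hx0L]; exact hNL
    have := push_left hL htu_cd hx0I haI hax0 hd0 (fun x hx =>
      hd2 x ⟨le_trans (le_max_left _ _) hx.1, hx.2.trans hx0I.2⟩ (hIcc x hx))
    exact absurd (hmax haI) (not_le.2 this)

end supbound

section aux

lemma F_pos_of_pos {F : ℝ → ℝ} (hF_smooth : ContDiffOn ℝ 1 F (Set.Ici 0)) (hF0 : F 0 = 0)
    (hF_deriv : ∀ s ∈ Set.Ici (0:ℝ), 0 < derivWithin F (Set.Ici 0) s) :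
    ∀ s : ℝ, 0 < s → 0 < F s := by
  have hmono : StrictMonoOn F (Ici 0) := by
    refine strictMonoOn_of_deriv_pos (convex_Ici 0) hF_smooth.continuousOn (fun x hx => ?_)
    rw [interior_Ici] at hx
    rw [← derivWithin_of_mem_nhds (Ici_mem_nhds hx)]
    exact hF_deriv x (Set.mem_Ici.2 (le_of_lt hx))
  intro s hs
  have := hmono (self_mem_Ici) (le_of_lt hs : (0:ℝ) ≤ s) hs
  rwa [hF0] at this

lemma d_antitone {d : ℝ → ℝ} (hd_smooth : ContDiffOn ℝ 2 d (Set.Ici 0))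
    (hd_deriv : ∀ s ∈ Set.Ici (0:ℝ), derivWithin d (Set.Ici 0) s ≤ 0) :
    AntitoneOn d (Ici 0) := by
  refine antitoneOn_of_deriv_nonpos (convex_Ici 0) hd_smooth.continuousOn
    ((hd_smooth.differentiableOn (by norm_num)).mono interior_subset) (fun x hx => ?_)
  rw [interior_Ici] at hx
  rw [← derivWithin_of_mem_nhds (Ici_mem_nhds hx)]
  exact hd_deriv x (Set.mem_Ici.2 (le_of_lt hx))

end aux

section comparison

variable {L ε : ℝ} {m F d tu u w : ℝ → ℝ}

/-- Case B of the comparison: if `u ≤ tu` everywhere, contact is impossible. -/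
lemma no_contact (hL : 0 < L) (hε : 0 < ε)
    (htu_cd : ContDiffOn ℝ 2 tu (Icc 0 L))
    (htu_eq : ∀ x ∈ Icc 0 L,
      ε * iteratedDerivWithin 2 tu (Icc 0 L) x + tu x * (m x - tu x) = 0)
    (htuN0 : derivWithin tu (Icc 0 L) 0 = 0) (htuNL : derivWithin tu (Icc 0 L) L = 0)
    (hu_cd : ContDiffOn ℝ 2 u (Icc 0 L))
    (hu_pos : ∀ x ∈ Icc 0 L, 0 < u x) (hw_pos : ∀ x ∈ Icc 0 L, 0 < w x)
    (hu_eq : ∀ x ∈ Icc 0 L,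
      ε * iteratedDerivWithin 2 u (Icc 0 L) x
        + u x * (m x - u x) - F (u x) / d (u x) * w x = 0)
    (huN0 : derivWithin u (Icc 0 L) 0 = 0) (huNL : derivWithin u (Icc 0 L) L = 0)
    (hFpos : ∀ s : ℝ, 0 < s → 0 < F s) (hdpos : ∀ s ∈ Set.Ici (0:ℝ), 0 < d s)
    (hle : ∀ x ∈ Icc 0 L, u x ≤ tu x) {x0 : ℝ} (hx0I : x0 ∈ Icc 0 L)
    (hc : u x0 = tu x0) : False := by
  have hu' := uniqueDiffOn_Icc hL
  set v : ℝ → ℝ := tu - u with hv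
  have hv_cd : ContDiffOn ℝ 2 v (Icc 0 L) := htu_cd.sub hu_cd
  have hv_nn : ∀ x ∈ Icc 0 L, 0 ≤ v x := by
    intro x hx; simp only [hv, Pi.sub_apply]; linarith [hle x hx]
  have hv_x0 : v x0 = 0 := by simp only [hv, Pi.sub_apply]; linarith
  -- second derivative of v at x0 is negative
  have hv2x0 : iteratedDerivWithin 2 v (Icc 0 L) x0 < 0 := by
    have hsub := iteratedDerivWithin_sub hx0I hu' (htu_cd x0 hx0I) (hu_cd x0 hx0I)
    rw [hv, hsub]
    have h1 := htu_eq x0 hx0I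
    have h2 := hu_eq x0 hx0I
    have hupos := hu_pos x0 hx0I
    rw [hc] at h2 hupos
    have hF := hFpos (tu x0) hupos
    have hd := hdpos (tu x0) hupos.le
    have hw := hw_pos x0 hx0I
    have hFdw : 0 < F (tu x0) / d (tu x0) * w x0 := by positivity
    by_contra hcon
    push_neg at hcon
    nlinarith [mul_nonneg hε.le hcon]
  -- derivative of v at x0 is zero
  have hv_d0 : derivWithin v (Icc 0 L) x0 = 0 := by
    have hds : derivWithin v (Icc 0 L) x0
        = derivWithin tu (Icc 0 L) x0 - derivWithin u (Icc 0 L) x0 :=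
      derivWithin_sub
        ((htu_cd.differentiableOn (by norm_num)) x0 hx0I)
        ((hu_cd.differentiableOn (by norm_num)) x0 hx0I)
    rcases eq_or_lt_of_le hx0I.1 with h0 | h0
    · rw [hds, ← h0, htuN0, huN0, sub_zero]
    · rcases eq_or_lt_of_le hx0I.2 with hL0 | hL0
      · rw [hds, hL0, htuNL, huNL, sub_zero]
      · rw [derivWithin_Icc_eq_deriv ⟨h0, hL0⟩]
        have hmin : IsLocalMin v x0 := by
          filter_upwards [Icc_mem_nhds h0 hL0] with y hy
          rw [hv_x0]; exact hv_nn y hy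
        exact hmin.deriv_eq_zero
  -- neighborhood where v'' < 0
  have hev : {z | iteratedDerivWithin 2 v (Icc 0 L) z ∈ Iio 0} ∈ 𝓝[Icc 0 L] x0 :=
    (contOn_d2 hL hv_cd x0 hx0I) (Iio_mem_nhds hv2x0)
  rw [Metric.mem_nhdsWithin_iff] at hev
  obtain ⟨δ, hδ, hball⟩ := hev
  rcases lt_or_eq_of_le hx0I.2 with hx0L | hx0L
  · set b := min L (x0 + δ / 2) with hb
    have hx0b : x0 < b := lt_min hx0L (by linarith)
    have hbI : b ∈ Icc 0 L := ⟨le_trans hx0I.1 hx0b.le, min_le_left _ _⟩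
    have hneg : ∀ x ∈ Icc x0 b, iteratedDerivWithin 2 v (Icc 0 L) x < 0 := by
      intro x hx
      have hxI : x ∈ Icc 0 L := ⟨le_trans hx0I.1 hx.1, le_trans hx.2 (min_le_left _ _)⟩
      refine hball ⟨?_, hxI⟩
      rw [Metric.mem_ball, Real.dist_eq, abs_lt]
      have : x ≤ x0 + δ / 2 := le_trans hx.2 (min_le_right _ _)
      constructor <;> [linarith [hx.1]; linarith]
    have := push_right_neg hL hv_cd hx0I hbI hx0b hv_d0 hneg
    rw [hv_x0] at this
    exact absurd (hv_nn b hbI) (not_le.2 this)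
  · set a := max 0 (L - δ / 2) with ha
    have hax0 : a < x0 := by rw [hx0L]; exact max_lt hL (by linarith)
    have haI : a ∈ Icc 0 L := ⟨le_max_left _ _, by rw [hx0L] at hax0; exact hax0.le⟩
    have hneg : ∀ x ∈ Icc a x0, iteratedDerivWithin 2 v (Icc 0 L) x < 0 := by
      intro x hx
      have hxI : x ∈ Icc 0 L := ⟨le_trans (le_max_left _ _) hx.1, hx.2.trans hx0I.2⟩
      refine hball ⟨?_, hxI⟩
      rw [Metric.mem_ball, Real.dist_eq, abs_lt]
      have h1 : L - δ / 2 ≤ x := le_trans (le_max_right _ _) hx.1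
      rw [hx0L] at hx ⊢
      constructor <;> linarith [hx.2, h1]
    have := push_left_neg hL hv_cd hx0I haI hax0 hv_d0 hneg
    rw [hv_x0] at this
    exact absurd (hv_nn a haI) (not_le.2 this)

end comparison

section crossing

variable {L ε : ℝ} {m F d tu u w : ℝ → ℝ}

lemma no_crossing (hL : 0 < L) (hε : 0 < ε)
    (htu_cd : ContDiffOn ℝ 2 tu (Icc 0 L))
    (htu_pos : ∀ x ∈ Icc 0 L, 0 < tu x)
    (htu_eq : ∀ x ∈ Icc 0 L,
      ε * iteratedDerivWithin 2 tu (Icc 0 L) x + tu x * (m x - tu x) = 0)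
    (htuN0 : derivWithin tu (Icc 0 L) 0 = 0) (htuNL : derivWithin tu (Icc 0 L) L = 0)
    (hu_cd : ContDiffOn ℝ 2 u (Icc 0 L))
    (hu_pos : ∀ x ∈ Icc 0 L, 0 < u x) (hw_pos : ∀ x ∈ Icc 0 L, 0 < w x)
    (hu_eq : ∀ x ∈ Icc 0 L,
      ε * iteratedDerivWithin 2 u (Icc 0 L) x
        + u x * (m x - u x) - F (u x) / d (u x) * w x = 0)
    (huN0 : derivWithin u (Icc 0 L) 0 = 0) (huNL : derivWithin u (Icc 0 L) L = 0)
    (hFpos : ∀ s : ℝ, 0 < s → 0 < F s) (hdpos : ∀ s ∈ Set.Ici (0:ℝ), 0 < d s)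
    {x1 : ℝ} (hx1I : x1 ∈ Icc 0 L) (hlt : tu x1 < u x1) : False := by
  set g : ℝ → ℝ := fun x =>
    tu x * derivWithin u (Icc 0 L) x - u x * derivWithin tu (Icc 0 L) x with hg
  -- the set of points left of x1 where u ≤ tu, together with 0
  set A1 : Set ℝ := insert 0 {x ∈ Icc 0 x1 | u x ≤ tu x} with hA1
  have hA1ne : A1.Nonempty := ⟨0, mem_insert _ _⟩
  have hA1sub : A1 ⊆ Icc 0 x1 :=
    insert_subset (left_mem_Icc.2 hx1I.1) (fun x hx => hx.1)
  have hA1bdd : BddAbove A1 := bddAbove_Icc.mono hA1sub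
  have hA1closed : IsClosed A1 := by
    rw [hA1, insert_eq]
    exact isClosed_singleton.union (isClosed_Icc.isClosed_le
      (hu_cd.continuousOn.mono (Icc_subset_Icc le_rfl hx1I.2))
      (htu_cd.continuousOn.mono (Icc_subset_Icc le_rfl hx1I.2)))
  set a := sSup A1 with haa
  have ha_mem : a ∈ A1 := hA1closed.csSup_mem hA1ne hA1bdd
  have ha_nn : 0 ≤ a := le_csSup hA1bdd (mem_insert _ _)
  have ha_le : a ≤ x1 := (hA1sub ha_mem).2
  have hleft : ∀ x, a < x → x ≤ x1 → tu x < u x := by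
    intro x hax hx1
    by_contra hcon
    push_neg at hcon
    have : x ∈ A1 := mem_insert_of_mem _ ⟨⟨le_trans ha_nn hax.le, hx1⟩, hcon⟩
    exact absurd (le_csSup hA1bdd this) (not_le.2 hax)
  -- the set of points right of x1 where u ≤ tu, together with L
  set B1 : Set ℝ := insert L {x ∈ Icc x1 L | u x ≤ tu x} with hB1
  have hB1ne : B1.Nonempty := ⟨L, mem_insert _ _⟩
  have hB1sub : B1 ⊆ Icc x1 L :=
    insert_subset (right_mem_Icc.2 hx1I.2) (fun x hx => hx.1)
  have hB1bdd : BddBelow B1 := bddBelow_Icc.mono hB1sub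
  have hB1closed : IsClosed B1 := by
    rw [hB1, insert_eq]
    exact isClosed_singleton.union (isClosed_Icc.isClosed_le
      (hu_cd.continuousOn.mono (Icc_subset_Icc hx1I.1 le_rfl))
      (htu_cd.continuousOn.mono (Icc_subset_Icc hx1I.1 le_rfl)))
  set b := sInf B1 with hbb
  have hb_mem : b ∈ B1 := hB1closed.csInf_mem hB1ne hB1bdd
  have hb_le : b ≤ L := csInf_le hB1bdd (mem_insert _ _)
  have hb_ge : x1 ≤ b := (hB1sub hb_mem).1
  have hright : ∀ x, x1 ≤ x → x < b → tu x < u x := by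
    intro x hx1x hxb
    by_contra hcon
    push_neg at hcon
    have : x ∈ B1 := mem_insert_of_mem _ ⟨⟨hx1x, le_trans hxb.le hb_le⟩, hcon⟩
    exact absurd (csInf_le hB1bdd this) (not_le.2 hxb)
  -- a < b
  have hab : a < b := by
    rcases lt_or_eq_of_le ha_le with h | h
    · exact lt_of_lt_of_le h hb_ge
    · have ha0 : a = 0 := by
        rcases ha_mem with h0 | hmem
        · exact h0
        · exact absurd hmem.2 (not_le.2 (h ▸ hlt))
      rcases lt_or_eq_of_le hb_ge with h' | h'
      · exact lt_of_le_of_lt ha_le h'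
      · have hbL : b = L := by
          rcases hb_mem with h0 | hmem
          · exact h0
          · exact absurd hmem.2 (not_le.2 (h' ▸ hlt))
        rw [ha0, hbL]; exact hL
  have haI : a ∈ Icc 0 L := ⟨ha_nn, le_trans ha_le hx1I.2⟩
  have hbI : b ∈ Icc 0 L := ⟨le_trans hx1I.1 hb_ge, hb_le⟩
  have hsubI : Icc a b ⊆ Icc 0 L := Icc_subset_Icc haI.1 hbI.2
  have hooI : Ioo a b ⊆ Ioo 0 L := Ioo_subset_Ioo haI.1 hbI.2
  -- u > tu on (a, b)
  have hmid : ∀ x ∈ Ioo a b, tu x < u x := by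
    intro x hx
    rcases lt_trichotomy x x1 with h | h | h
    · exact hleft x hx.1 h.le
    · rw [h]; exact hlt
    · exact hright x h.le hx.2
  -- g is strictly monotone on [a, b]
  have hgcont : ContinuousOn g (Icc 0 L) :=
    (htu_cd.continuousOn.mul (contOn_d1 hL hu_cd)).sub
      (hu_cd.continuousOn.mul (contOn_d1 hL htu_cd))
  have hgmono : StrictMonoOn g (Icc a b) := by
    refine strictMonoOn_of_deriv_pos (convex_Icc _ _) (hgcont.mono hsubI) (fun x hx => ?_)
    rw [interior_Icc] at hx
    have hoo : x ∈ Ioo 0 L := hooI hx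
    have hxI : x ∈ Icc 0 L := Ioo_subset_Icc_self hoo
    have ht : HasDerivAt g
        (derivWithin tu (Icc 0 L) x * derivWithin u (Icc 0 L) x
          + tu x * iteratedDerivWithin 2 u (Icc 0 L) x
          - (derivWithin u (Icc 0 L) x * derivWithin tu (Icc 0 L) x
            + u x * iteratedDerivWithin 2 tu (Icc 0 L) x)) x :=
      ((hasDerivAt_self hL htu_cd hoo).mul (hasDerivAt_d1 hL hu_cd hoo)).sub
        ((hasDerivAt_self hL hu_cd hoo).mul (hasDerivAt_d1 hL htu_cd hoo))
    rw [ht.deriv]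
    have h1 := htu_eq x hxI
    have h2 := hu_eq x hxI
    have hF := hFpos (u x) (hu_pos x hxI)
    have hd := hdpos (u x) (hu_pos x hxI).le
    have hw := hw_pos x hxI
    have htp := htu_pos x hxI
    have hup := hu_pos x hxI
    have hFdw : 0 < F (u x) / d (u x) * w x := by positivity
    have key : ε * (tu x * iteratedDerivWithin 2 u (Icc 0 L) x
        - u x * iteratedDerivWithin 2 tu (Icc 0 L) x)
        = tu x * (F (u x) / d (u x) * w x) + tu x * u x * (u x - tu x) := by
      linear_combination tu x * h2 - u x * h1
    have hrhs : 0 < tu x * (F (u x) / d (u x) * w x) + tu x * u x * (u x - tu x) :=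
      add_pos (mul_pos htp hFdw)
        (mul_pos (mul_pos htp hup) (sub_pos.2 (hmid x hx)))
    nlinarith [key, hrhs, hε]
  -- g a ≥ 0
  have hga : 0 ≤ g a := by
    rcases eq_or_lt_of_le ha_nn with h0 | h0
    · have : g a = 0 := by
        simp only [hg, ← h0, huN0, htuN0, mul_zero, sub_zero]
      rw [this]
    · -- a > 0, touching point
      have haoo : a ∈ Ioo 0 L := ⟨h0, lt_of_lt_of_le hab hbI.2⟩
      have haule : u a ≤ tu a := by
        rcases ha_mem with hh | hh
        · exact absurd hh (ne_of_gt h0)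
        · exact hh.2
      set φ : ℝ → ℝ := fun x => u x - tu x with hφ
      have hφd : HasDerivAt φ
          (derivWithin u (Icc 0 L) a - derivWithin tu (Icc 0 L) a) a :=
        (hasDerivAt_self hL hu_cd haoo).sub (hasDerivAt_self hL htu_cd haoo)
      have hφa : φ a = 0 := by
        have hge : 0 ≤ φ a := by
          refine ge_of_tendsto (hφd.continuousAt.tendsto.mono_left
            (nhdsWithin_le_nhds : 𝓝[>] a ≤ 𝓝 a)) ?_
          filter_upwards [Ioo_mem_nhdsGT_of_mem (left_mem_Ico.2 hab)] with x hx
          exact sub_nonneg.2 (hmid x hx).le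
        simp only [hφ] at hge ⊢
        linarith
      have hc : 0 ≤ derivWithin u (Icc 0 L) a - derivWithin tu (Icc 0 L) a :=
        deriv_nonneg_of_right hab hφd hφa
          (fun x hx => sub_nonneg.2 (hmid x hx).le)
      have hua : u a = tu a := by simpa [hφ, sub_eq_zero] using hφa
      have : g a = tu a * (derivWithin u (Icc 0 L) a - derivWithin tu (Icc 0 L) a) := by
        simp only [hg, hua]; ring
      rw [this]
      exact mul_nonneg (htu_pos a haI).le hc
  -- g b ≤ 0
  have hgb : g b ≤ 0 := by
    rcases eq_or_lt_of_le hb_le with h0 | h0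
    · have : g b = 0 := by
        simp only [hg, h0, huNL, htuNL, mul_zero, sub_zero]
      rw [this]
    · have hboo : b ∈ Ioo 0 L := ⟨lt_of_le_of_lt haI.1 hab, h0⟩
      have hbule : u b ≤ tu b := by
        rcases hb_mem with hh | hh
        · exact absurd hh (ne_of_lt h0)
        · exact hh.2
      set φ : ℝ → ℝ := fun x => u x - tu x with hφ
      have hφd : HasDerivAt φ
          (derivWithin u (Icc 0 L) b - derivWithin tu (Icc 0 L) b) b :=
        (hasDerivAt_self hL hu_cd hboo).sub (hasDerivAt_self hL htu_cd hboo)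
      have hφb : φ b = 0 := by
        have hge : 0 ≤ φ b := by
          refine ge_of_tendsto (hφd.continuousAt.tendsto.mono_left
            (nhdsWithin_le_nhds : 𝓝[<] b ≤ 𝓝 b)) ?_
          filter_upwards [Ioo_mem_nhdsLT_of_mem (right_mem_Ioc.2 hab)] with x hx
          exact sub_nonneg.2 (hmid x hx).le
        simp only [hφ] at hge ⊢
        linarith
      have hc : derivWithin u (Icc 0 L) b - derivWithin tu (Icc 0 L) b ≤ 0 :=
        deriv_nonpos_of_left hab hφd hφb
          (fun x hx => sub_nonneg.2 (hmid x hx).le)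
      have hub : u b = tu b := by simpa [hφ, sub_eq_zero] using hφb
      have : g b = tu b * (derivWithin u (Icc 0 L) b - derivWithin tu (Icc 0 L) b) := by
        simp only [hg, hub]; ring
      rw [this]
      exact mul_nonpos_of_nonneg_of_nonpos (htu_pos b hbI).le hc
  have := hgmono (left_mem_Icc.2 hab.le) (right_mem_Icc.2 hab.le) hab
  linarith

end crossing

section integralid

variable {L ε μ α θ : ℝ} {m F d u w : ℝ → ℝ}

lemma integral_identity (hL : 0 < L) (hε : 0 < ε) (hμ : 0 < μ)
    (hm_cont : ContinuousOn m (Icc 0 L))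
    (hF_cont : ContinuousOn F (Set.Ici 0))
    (hd_cont : ContinuousOn d (Set.Ici 0))
    (hdpos : ∀ s ∈ Set.Ici (0:ℝ), 0 < d s)
    (hu_cd : ContDiffOn ℝ 2 u (Icc 0 L)) (hw_cd : ContDiffOn ℝ 2 w (Icc 0 L))
    (hu_pos : ∀ x ∈ Icc 0 L, 0 < u x)
    (hu_eq : ∀ x ∈ Icc 0 L,
      ε * iteratedDerivWithin 2 u (Icc 0 L) x
        + u x * (m x - u x) - F (u x) / d (u x) * w x = 0)
    (hw_eq : ∀ x ∈ Icc 0 L,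
      μ * iteratedDerivWithin 2 w (Icc 0 L) x
        + (α * F (u x) - θ) / d (u x) * w x = 0)
    (huN0 : derivWithin u (Icc 0 L) 0 = 0) (huNL : derivWithin u (Icc 0 L) L = 0)
    (hwN0 : derivWithin w (Icc 0 L) 0 = 0) (hwNL : derivWithin w (Icc 0 L) L = 0) :
    (∫ x in (0:ℝ)..L, θ * w x / d (u x)) = α * ∫ x in (0:ℝ)..L, u x * (m x - u x) := by
  have huIcc : Icc (0:ℝ) L = uIcc (0:ℝ) L := (uIcc_of_le hL.le).symm
  have hmaps : ∀ x ∈ Icc 0 L, u x ∈ Ici (0:ℝ) := fun x hx => (hu_pos x hx).le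
  have hcu : ContinuousOn u (Icc 0 L) := hu_cd.continuousOn
  have hcw : ContinuousOn w (Icc 0 L) := hw_cd.continuousOn
  have hFu : ContinuousOn (fun x => F (u x)) (Icc 0 L) := hF_cont.comp hcu hmaps
  have hdu : ContinuousOn (fun x => d (u x)) (Icc 0 L) := hd_cont.comp hcu hmaps
  have hdne : ∀ x ∈ Icc 0 L, d (u x) ≠ 0 := fun x hx => (hdpos (u x) (hmaps x hx)).ne'
  -- continuity of the basic integrands
  have hA : ContinuousOn (fun x => F (u x) / d (u x) * w x) (Icc 0 L) :=
    (hFu.div hdu hdne).mul hcw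
  have hB : ContinuousOn (fun x => u x * (m x - u x)) (Icc 0 L) :=
    hcu.mul (hm_cont.sub hcu)
  have hC : ContinuousOn (fun x => θ * w x / d (u x)) (Icc 0 L) :=
    (continuousOn_const.mul hcw).div hdu hdne
  have hAi : IntervalIntegrable (fun x => F (u x) / d (u x) * w x)
      MeasureTheory.volume 0 L := hA.intervalIntegrable_of_Icc hL.le
  have hBi : IntervalIntegrable (fun x => u x * (m x - u x))
      MeasureTheory.volume 0 L := hB.intervalIntegrable_of_Icc hL.le
  have hCi : IntervalIntegrable (fun x => θ * w x / d (u x))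
      MeasureTheory.volume 0 L := hC.intervalIntegrable_of_Icc hL.le
  -- first equation integrated
  have hInt1 : (∫ x in (0:ℝ)..L, iteratedDerivWithin 2 u (Icc 0 L) x) = 0 := by
    rw [integral_d2 hL hu_cd, huNL, huN0, sub_zero]
  have hcongr1 : (∫ x in (0:ℝ)..L, iteratedDerivWithin 2 u (Icc 0 L) x)
      = ∫ x in (0:ℝ)..L, (F (u x) / d (u x) * w x - u x * (m x - u x)) / ε := by
    refine intervalIntegral.integral_congr ?_
    rw [← huIcc]
    intro x hx
    have h := hu_eq x hx
    have hd := hdne x hx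
    field_simp at h ⊢
    linarith
  have hE1 : (∫ x in (0:ℝ)..L, F (u x) / d (u x) * w x)
      = ∫ x in (0:ℝ)..L, u x * (m x - u x) := by
    have h1 : (∫ x in (0:ℝ)..L, (F (u x) / d (u x) * w x - u x * (m x - u x)) / ε) = 0 := by
      rw [← hcongr1, hInt1]
    rw [intervalIntegral.integral_div] at h1
    have h2 : (∫ x in (0:ℝ)..L, (F (u x) / d (u x) * w x - u x * (m x - u x))) = 0 := by
      have := div_eq_zero_iff.1 h1
      rcases this with h | h
      · exact h
      · exact absurd h hε.ne'
    rw [intervalIntegral.integral_sub hAi hBi] at h2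
    linarith
  -- second equation integrated
  have hInt2 : (∫ x in (0:ℝ)..L, iteratedDerivWithin 2 w (Icc 0 L) x) = 0 := by
    rw [integral_d2 hL hw_cd, hwNL, hwN0, sub_zero]
  have hcongr2 : (∫ x in (0:ℝ)..L, iteratedDerivWithin 2 w (Icc 0 L) x)
      = ∫ x in (0:ℝ)..L, (θ * w x / d (u x) - α * (F (u x) / d (u x) * w x)) / μ := by
    refine intervalIntegral.integral_congr ?_
    rw [← huIcc]
    intro x hx
    have h := hw_eq x hx
    have hd := hdne x hx
    field_simp
    field_simp at h
    linarith
  have hE2 : (∫ x in (0:ℝ)..L, θ * w x / d (u x))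
      = α * ∫ x in (0:ℝ)..L, F (u x) / d (u x) * w x := by
    have h1 : (∫ x in (0:ℝ)..L,
        (θ * w x / d (u x) - α * (F (u x) / d (u x) * w x)) / μ) = 0 := by
      rw [← hcongr2, hInt2]
    rw [intervalIntegral.integral_div] at h1
    have h2 : (∫ x in (0:ℝ)..L,
        (θ * w x / d (u x) - α * (F (u x) / d (u x) * w x))) = 0 := by
      rcases div_eq_zero_iff.1 h1 with h | h
      · exact h
      · exact absurd h hμ.ne'
    rw [intervalIntegral.integral_sub hCi (hAi.const_mul α),
      intervalIntegral.integral_const_mul] at h2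
    linarith
  rw [hE2, hE1]

end integralid


/-- a priori bounds for positive solutions:
(i) `u < ũ ≤ max m` on `[0,L]`;
(ii) `∫₀^L θ w / d(u) = α ∫₀^L u (m - u)`;
(iii) `∫₀^L w < α d(0) (max m)² L / (4θ)`. -/
theorem stmt_14 (L ε μ α θ : ℝ) (hL : 0 < L) (hε : 0 < ε) (hμ : 0 < μ)
    (hα : 0 < α) (hθ : 0 < θ)
    (m F d tu u w : ℝ → ℝ)
    -- (H1)
    (hm_cont : ContinuousOn m (Set.Icc 0 L))
    (hm_noncon : ∃ x ∈ Set.Icc 0 L, ∃ y ∈ Set.Icc 0 L, m x ≠ m y)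
    (hm_int : 0 < ∫ x in (0:ℝ)..L, m x)
    -- (H2)
    (hF_smooth : ContDiffOn ℝ 1 F (Set.Ici 0)) (hF0 : F 0 = 0)
    (hF_deriv : ∀ s ∈ Set.Ici (0:ℝ), 0 < derivWithin F (Set.Ici 0) s)
    -- (H3)
    (hd_smooth : ContDiffOn ℝ 2 d (Set.Ici 0))
    (hd_pos : ∀ s ∈ Set.Ici (0:ℝ), 0 < d s)
    (hd_deriv : ∀ s ∈ Set.Ici (0:ℝ), derivWithin d (Set.Ici 0) s ≤ 0)
    (hd_ne : ∃ s ∈ Set.Ici (0:ℝ), derivWithin d (Set.Ici 0) s ≠ 0)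
    -- positive solution of the logistic problem
    (htu : IsLogistic L ε m tu)
    -- positive solution of the steady-state system
    (hsol : IsPosSol L ε μ α θ m F d u w) :
    (∀ x ∈ Set.Icc 0 L, u x < tu x ∧ tu x ≤ sSup (m '' Set.Icc 0 L)) ∧
    (∫ x in (0:ℝ)..L, θ * w x / d (u x)) =
      α * ∫ x in (0:ℝ)..L, u x * (m x - u x) ∧
    (∫ x in (0:ℝ)..L, w x) <
      α * d 0 * sSup (m '' Set.Icc 0 L) ^ 2 * L / (4 * θ) := by
  obtain ⟨htu_cd, htu_pos, htu_eq, htuN0, htuNL⟩ := htu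
  obtain ⟨hu_cd, hw_cd, hu_pos, hw_pos, hu_eq, hw_eq, huN0, huNL, hwN0, hwNL⟩ := hsol
  have hFpos := F_pos_of_pos hF_smooth hF0 hF_deriv
  have hsup := logistic_le_sup hL hε hm_cont htu_cd htu_pos htu_eq htuN0 htuNL
  -- part (i): comparison
  have hcomp : ∀ x ∈ Set.Icc 0 L, u x < tu x := by
    by_contra hcon
    push_neg at hcon
    obtain ⟨x0, hx0I, hx0⟩ := hcon
    by_cases hstrict : ∃ x1 ∈ Set.Icc 0 L, tu x1 < u x1
    · obtain ⟨x1, hx1I, hx1⟩ := hstrict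
      exact no_crossing hL hε htu_cd htu_pos htu_eq htuN0 htuNL hu_cd hu_pos hw_pos
        hu_eq huN0 huNL hFpos hd_pos hx1I hx1
    · push_neg at hstrict
      exact no_contact hL hε htu_cd htu_eq htuN0 htuNL hu_cd hu_pos hw_pos
        hu_eq huN0 huNL hFpos hd_pos hstrict hx0I (le_antisymm (hstrict x0 hx0I) hx0)
  -- part (ii)
  have hii := integral_identity hL hε hμ hm_cont hF_smooth.continuousOn
    hd_smooth.continuousOn hd_pos hu_cd hw_cd hu_pos hu_eq hw_eq huN0 huNL hwN0 hwNL
  refine ⟨fun x hx => ⟨hcomp x hx, hsup x hx⟩, hii, ?_⟩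
  -- part (iii)
  set M := sSup (m '' Set.Icc 0 L) with hM
  have hmle : ∀ x ∈ Set.Icc 0 L, m x ≤ M := fun x hx =>
    le_csSup (isCompact_Icc.image_of_continuousOn hm_cont).bddAbove ⟨x, hx, rfl⟩
  obtain ⟨p, hpI, q, hqI, hpq⟩ := hm_noncon
  obtain ⟨c, hcI, hc⟩ : ∃ c ∈ Set.Icc 0 L, m c < M := by
    rcases lt_or_gt_of_ne hpq with h | h
    · exact ⟨p, hpI, lt_of_lt_of_le h (hmle q hqI)⟩
    · exact ⟨q, hqI, lt_of_lt_of_le h (hmle p hpI)⟩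
  have hub : ∀ x ∈ Set.Icc 0 L, u x * (m x - u x) ≤ M ^ 2 / 4 := by
    intro x hx
    nlinarith [sq_nonneg (M - 2 * u x),
      mul_nonneg (hu_pos x hx).le (sub_nonneg.2 (hmle x hx))]
  have hubc : u c * (m c - u c) < M ^ 2 / 4 := by
    nlinarith [sq_nonneg (M - 2 * u c), mul_pos (hu_pos c hcI) (sub_pos.2 hc)]
  have hcu := hu_cd.continuousOn
  have hcw := hw_cd.continuousOn
  have hmaps : ∀ x ∈ Set.Icc 0 L, u x ∈ Set.Ici (0:ℝ) := fun x hx => (hu_pos x hx).le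
  have hdu : ContinuousOn (fun x => d (u x)) (Set.Icc 0 L) :=
    hd_smooth.continuousOn.comp hcu hmaps
  have hdux : ∀ x ∈ Set.Icc 0 L, 0 < d (u x) := fun x hx => hd_pos _ (hmaps x hx)
  have hdne : ∀ x ∈ Set.Icc 0 L, d (u x) ≠ 0 := fun x hx => (hdux x hx).ne'
  have hB : ContinuousOn (fun x => u x * (m x - u x)) (Set.Icc 0 L) :=
    hcu.mul (hm_cont.sub hcu)
  have hI1 : (∫ x in (0:ℝ)..L, u x * (m x - u x)) < ∫ _x in (0:ℝ)..L, M ^ 2 / 4 :=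
    intervalIntegral.integral_lt_integral_of_continuousOn_of_le_of_exists_lt hL hB
      continuousOn_const (fun x hx => hub x (Set.Ioc_subset_Icc_self hx)) ⟨c, hcI, hubc⟩
  rw [intervalIntegral.integral_const, smul_eq_mul, sub_zero] at hI1
  have hd0 : 0 < d 0 := hd_pos 0 Set.self_mem_Ici
  have hanti := d_antitone hd_smooth hd_deriv
  have hdle : ∀ x ∈ Set.Icc 0 L, d (u x) ≤ d 0 := fun x hx =>
    hanti Set.self_mem_Ici (hmaps x hx) (hmaps x hx)
  have hC : ContinuousOn (fun x => θ * w x / d (u x)) (Set.Icc 0 L) :=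
    (continuousOn_const.mul hcw).div hdu hdne
  have hC0 : ContinuousOn (fun x => θ * w x / d 0) (Set.Icc 0 L) :=
    (continuousOn_const.mul hcw).div continuousOn_const (fun x _ => hd0.ne')
  have hCi : IntervalIntegrable (fun x => θ * w x / d (u x)) MeasureTheory.volume 0 L :=
    hC.intervalIntegrable_of_Icc hL.le
  have hC0i : IntervalIntegrable (fun x => θ * w x / d 0) MeasureTheory.volume 0 L :=
    hC0.intervalIntegrable_of_Icc hL.le
  have hptw : ∀ x ∈ Set.Icc 0 L, θ * w x / d 0 ≤ θ * w x / d (u x) := by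
    intro x hx
    have h1 : 0 ≤ θ * w x := mul_nonneg hθ.le (hw_pos x hx).le
    exact div_le_div_of_nonneg_left h1 (hdux x hx) (hdle x hx)
  have hmono : (∫ x in (0:ℝ)..L, θ * w x / d 0) ≤ ∫ x in (0:ℝ)..L, θ * w x / d (u x) :=
    intervalIntegral.integral_mono_on hL.le hC0i hCi hptw
  have hconst : (∫ x in (0:ℝ)..L, θ * w x / d 0)
      = (θ / d 0) * ∫ x in (0:ℝ)..L, w x := by
    rw [← intervalIntegral.integral_const_mul]
    exact intervalIntegral.integral_congr (fun x _ => by ring)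
  have hkey : (θ / d 0) * (∫ x in (0:ℝ)..L, w x) < α * (L * (M ^ 2 / 4)) := by
    rw [← hconst]
    calc (∫ x in (0:ℝ)..L, θ * w x / d 0)
        ≤ ∫ x in (0:ℝ)..L, θ * w x / d (u x) := hmono
      _ = α * ∫ x in (0:ℝ)..L, u x * (m x - u x) := hii
      _ < α * (L * (M ^ 2 / 4)) := by
          exact mul_lt_mul_of_pos_left hI1 hα
  have h4θ : (0:ℝ) < 4 * θ := by linarith
  rw [lt_div_iff₀ h4θ]
  have hmul := mul_lt_mul_of_pos_right hkey hd0
  have heq : θ / d 0 * (∫ x in (0:ℝ)..L, w x) * d 0 = θ * ∫ x in (0:ℝ)..L, w x := by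
    field_simp
  rw [heq] at hmul
  nlinarith [hmul]
end

section
/- Assume (H1), (H2), (H3), fix μ, α > 0, and set m̄ := (1/L) ∫₀^L m(x) dx (note m̄ > 0). If θ > α F(m̄), then there exists ε₀ > 0 such that for every ε ≥ ε₀ the steady-state system (with diffusion rate ε in the prey equation) has no positive solution. -/
open Set MeasureTheory intervalIntegral

/-- FTC on subintervals of `[0, L]` from derivatives within `[0, L]`. -/
private lemma ftc_icc {L : ℝ} {f f' : ℝ → ℝ}
    (hf : ∀ x ∈ Set.Icc (0:ℝ) L, HasDerivWithinAt f (f' x) (Set.Icc 0 L) x)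
    (hc : ContinuousOn f' (Set.Icc (0:ℝ) L)) :
    ∀ a ∈ Set.Icc (0:ℝ) L, ∀ b ∈ Set.Icc (0:ℝ) L, a ≤ b →
      ∫ y in a..b, f' y = f b - f a := by
  intro a ha b hb hab
  have hsub : Set.Icc a b ⊆ Set.Icc (0:ℝ) L := Set.Icc_subset_Icc ha.1 hb.2
  have hfc : ContinuousOn f (Set.Icc (0:ℝ) L) := fun x hx => (hf x hx).continuousWithinAt
  refine intervalIntegral.integral_eq_sub_of_hasDeriv_right_of_le hab (hfc.mono hsub)
      (fun x hx => ?_) ?_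
  · have hx0 : x ∈ Set.Icc (0:ℝ) L := ⟨ha.1.trans hx.1.le, hx.2.le.trans hb.2⟩
    have hnh : Set.Icc (0:ℝ) L ∈ nhds x :=
      Icc_mem_nhds (lt_of_le_of_lt ha.1 hx.1) (lt_of_lt_of_le hx.2 hb.2)
    exact ((hf x hx0).hasDerivAt hnh).hasDerivWithinAt
  · have h2 : ContinuousOn f' (Set.uIcc a b) := by
      rw [Set.uIcc_of_le hab]; exact hc.mono hsub
    exact h2.intervalIntegrable


private lemma arith_g_bound (uu mm M : ℝ) (h1 : -M ≤ mm) (h2 : mm ≤ M) :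
    uu * (mm - uu) ≤ M ^ 2 / 4 := by
  nlinarith [sq_nonneg (mm - 2 * uu), sq_le_sq' h1 h2]

private lemma arith_ptwise (uu mm M b δ : ℝ) (h1 : uu ≤ b) (h2 : b - δ ≤ uu)
    (h3 : -M ≤ mm) (h4 : mm ≤ M) (h5 : 0 ≤ b - δ) (hM : 0 ≤ M) :
    uu * (mm - uu) ≤ b * mm + (δ * M - (b - δ) ^ 2) := by
  nlinarith [mul_nonneg (sub_nonneg.2 h1) (by linarith : (0:ℝ) ≤ mm + M),
    mul_le_mul_of_nonneg_right (show b - uu ≤ δ by linarith) hM,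
    mul_self_le_mul_self h5 h2]

private lemma arith_key (L b mb δ M : ℝ) (hL : 0 < L)
    (h2 : 0 ≤ b * (L * mb) + L * (δ * M - (b - δ) ^ 2)) :
    (b - δ) ^ 2 ≤ b * mb + δ * M := by
  nlinarith [mul_pos hL hL]

private lemma arith_b4M (b mb δ M : ℝ) (hkey : (b - δ) ^ 2 ≤ b * mb + δ * M)
    (hmbM : mb ≤ M) (hδM : δ ≤ M) (hδ0 : 0 ≤ δ) (hM1 : 1 ≤ M) (hb : 0 < b) :
    b ≤ 4 * M := by
  by_contra h
  push_neg at h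
  nlinarith [sq_nonneg δ, mul_le_mul_of_nonneg_left hmbM hb.le,
    mul_le_mul_of_nonneg_left hδM hb.le, sq_nonneg (b - 4 * M)]

private lemma arith_bmb (b mb δ M ρ δ₀ : ℝ) (hkey : (b - δ) ^ 2 ≤ b * mb + δ * M)
    (hb4M : b ≤ 4 * M) (hmb : 0 < mb) (hbmb : mb < b) (hδ : 0 < δ)
    (hδδ₀ : δ ≤ δ₀) (h9 : 9 * M * δ₀ ≤ ρ * mb) (hM : 0 < M) :
    b - mb ≤ ρ := by
  have h1 : b * (b - mb) ≤ 2 * b * δ + δ * M := by nlinarith [sq_nonneg δ]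
  have h2 : mb * (b - mb) ≤ 9 * M * δ := by
    nlinarith [mul_nonneg (sub_nonneg.2 hbmb.le) (sub_nonneg.2 hbmb.le),
      mul_le_mul_of_nonneg_right hb4M hδ.le]
  have h3 : 9 * M * δ ≤ 9 * M * δ₀ :=
    mul_le_mul_of_nonneg_left hδδ₀ (by positivity)
  have h4 : mb * (b - mb) ≤ ρ * mb := by linarith
  nlinarith [h4, hmb]

private lemma arith_osc (L M ε y x : ℝ) (hL : 0 < L) (hε : 0 < ε)
    (h1 : y - x ≤ L) (h2 : 0 ≤ y - x) :
    (y - x) * (L * M ^ 2 / (2 * ε)) ≤ L ^ 2 * M ^ 2 / ε := by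
  have h3 : (y - x) * (L * M ^ 2 / (2 * ε)) ≤ L * (L * M ^ 2 / (2 * ε)) :=
    mul_le_mul_of_nonneg_right h1 (by positivity)
  have h4 : L * (L * M ^ 2 / (2 * ε)) = L ^ 2 * M ^ 2 / ε / 2 := by
    field_simp
  have h5 : 0 ≤ L ^ 2 * M ^ 2 / ε := by positivity
  linarith

set_option maxHeartbeats 1000000 in
/-- if `θ > α F(m̄)` where `m̄ = (1/L) ∫₀^L m`, then for all
sufficiently large prey diffusion rates `ε` the steady-state system has no
positive solution. -/
theorem stmt_15 (L μ α θ : ℝ) (hL : 0 < L) (hμ : 0 < μ) (hα : 0 < α)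
    (m F d : ℝ → ℝ)
    -- (H1)
    (hm_cont : ContinuousOn m (Set.Icc 0 L))
    (hm_noncon : ∃ x ∈ Set.Icc 0 L, ∃ y ∈ Set.Icc 0 L, m x ≠ m y)
    (hm_int : 0 < ∫ x in (0:ℝ)..L, m x)
    -- (H2)
    (hF_smooth : ContDiffOn ℝ 1 F (Set.Ici 0)) (hF0 : F 0 = 0)
    (hF_deriv : ∀ s ∈ Set.Ici (0:ℝ), 0 < derivWithin F (Set.Ici 0) s)
    -- (H3)
    (hd_smooth : ContDiffOn ℝ 2 d (Set.Ici 0))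
    (hd_pos : ∀ s ∈ Set.Ici (0:ℝ), 0 < d s)
    (hd_deriv : ∀ s ∈ Set.Ici (0:ℝ), derivWithin d (Set.Ici 0) s ≤ 0)
    (hd_ne : ∃ s ∈ Set.Ici (0:ℝ), derivWithin d (Set.Ici 0) s ≠ 0)
    -- θ large
    (hθ : α * F ((1 / L) * ∫ x in (0:ℝ)..L, m x) < θ) :
    ∃ ε₀ : ℝ, 0 < ε₀ ∧ ∀ ε : ℝ, ε₀ ≤ ε →
      ¬ ∃ u w, IsPosSol L ε μ α θ m F d u w := by
  classical
  have hsUD : UniqueDiffOn ℝ (Set.Icc (0:ℝ) L) := uniqueDiffOn_Icc hL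
  set mb : ℝ := (1 / L) * ∫ x in (0:ℝ)..L, m x with hmbdef
  have hmbpos : 0 < mb := mul_pos (by positivity) hm_int
  have hIcc_uIcc : Set.uIcc (0:ℝ) L = Set.Icc (0:ℝ) L := Set.uIcc_of_le hL.le
  have hInt : ∀ {f : ℝ → ℝ}, ContinuousOn f (Set.Icc (0:ℝ) L) →
      IntervalIntegrable f volume 0 L := by
    intro f hf
    have : ContinuousOn f (Set.uIcc (0:ℝ) L) := by rwa [hIcc_uIcc]
    exact this.intervalIntegrable
  -- a bound M for m
  obtain ⟨C, hC⟩ := (isCompact_Icc (a := (0:ℝ)) (b := L)).exists_bound_of_continuousOn hm_cont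
  set M : ℝ := max C 1 with hMdef
  have hM1 : (1:ℝ) ≤ M := le_max_right _ _
  have hM0 : 0 < M := lt_of_lt_of_le one_pos hM1
  have hmM : ∀ x ∈ Set.Icc (0:ℝ) L, |m x| ≤ M := fun x hx =>
    le_trans (by simpa using hC x hx) (le_max_left _ _)
  have hintm : ∫ x in (0:ℝ)..L, m x = L * mb := by
    rw [hmbdef]; field_simp
  have hmbM : mb ≤ M := by
    have h1 : ∫ x in (0:ℝ)..L, m x ≤ ∫ _x in (0:ℝ)..L, M :=
      intervalIntegral.integral_mono_on hL.le (hInt hm_cont)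
        (_root_.intervalIntegrable_const) (fun x hx => (abs_le.1 (hmM x hx)).2)
    rw [intervalIntegral.integral_const, smul_eq_mul, sub_zero, hintm] at h1
    have := (mul_le_mul_iff_right₀ hL).1 h1
    exact this
  -- F is strictly monotone on [0, ∞)
  have hFmono : StrictMonoOn F (Set.Ici (0:ℝ)) := by
    apply strictMonoOn_of_deriv_pos (convex_Ici 0) hF_smooth.continuousOn
    intro x hx
    rw [interior_Ici] at hx
    have hnh : Set.Ici (0:ℝ) ∈ nhds x := Ici_mem_nhds hx
    rw [← derivWithin_of_mem_nhds hnh]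
    exact hF_deriv x (Set.mem_Ici.2 (le_of_lt (Set.mem_Ioi.1 hx)))
  have hFmb : F mb < θ / α := by
    rw [lt_div_iff₀ hα]
    have hcomm : F mb * α = α * F mb := mul_comm _ _
    linarith
  -- continuity of F at mb
  obtain ⟨ρ, hρpos, hρ⟩ : ∃ ρ > 0, ∀ t ∈ Set.Ici (0:ℝ), |t - mb| ≤ ρ → F t < θ / α := by
    have hcw : ContinuousWithinAt F (Set.Ici (0:ℝ)) mb :=
      hF_smooth.continuousOn.continuousWithinAt hmbpos.le
    obtain ⟨ρ', hρ'pos, h⟩ := Metric.continuousWithinAt_iff.1 hcw (θ / α - F mb)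
      (by linarith)
    refine ⟨ρ' / 2, by positivity, fun t ht hdist => ?_⟩
    have h2 := h ht (by rw [Real.dist_eq]; linarith [abs_nonneg (t - mb)])
    rw [Real.dist_eq] at h2
    have h3 := (abs_lt.1 h2).2
    linarith
  -- choice of δ₀ and ε₀
  set δ₀ : ℝ := min (ρ * mb / (9 * M)) (mb / 2) with hδ₀def
  have hδ₀pos : 0 < δ₀ := lt_min (by positivity) (by positivity)
  have hδ₀mb : δ₀ ≤ mb / 2 := min_le_right _ _
  have h9 : 9 * M * δ₀ ≤ ρ * mb := by
    have h1 : δ₀ ≤ ρ * mb / (9 * M) := min_le_left _ _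
    have h2 := (le_div_iff₀ (by positivity : (0:ℝ) < 9 * M)).1 h1
    calc 9 * M * δ₀ = δ₀ * (9 * M) := by ring
      _ ≤ ρ * mb := h2
  refine ⟨L ^ 2 * M ^ 2 / δ₀, by positivity, fun ε hεε => ?_⟩
  rintro ⟨u, w, hu, hw, hupos, hwpos, heq1, heq2, hu0, huL, hw0, hwL⟩
  have hε : 0 < ε := lt_of_lt_of_le (by positivity) hεε
  set δ : ℝ := L ^ 2 * M ^ 2 / ε with hδdef
  have hδpos : 0 < δ := by positivity
  have hδδ₀ : δ ≤ δ₀ := by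
    rw [hδdef, div_le_iff₀ hε]
    have h2 := (div_le_iff₀ hδ₀pos).1 hεε
    calc L ^ 2 * M ^ 2 ≤ ε * δ₀ := h2
      _ = δ₀ * ε := mul_comm _ _
  -- derivatives of u
  have hucont : ContinuousOn u (Set.Icc (0:ℝ) L) := hu.continuousOn
  have hwcont : ContinuousOn w (Set.Icc (0:ℝ) L) := hw.continuousOn
  set u' : ℝ → ℝ := derivWithin u (Set.Icc 0 L) with hu'def
  set u2 : ℝ → ℝ := iteratedDerivWithin 2 u (Set.Icc 0 L) with hu2def
  set w' : ℝ → ℝ := derivWithin w (Set.Icc 0 L) with hw'def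
  set w2 : ℝ → ℝ := iteratedDerivWithin 2 w (Set.Icc 0 L) with hw2def
  have hcd1u : ContDiffOn ℝ 1 u' (Set.Icc (0:ℝ) L) := hu.derivWithin hsUD (by norm_num)
  have hcd1w : ContDiffOn ℝ 1 w' (Set.Icc (0:ℝ) L) := hw.derivWithin hsUD (by norm_num)
  have hu'cont : ContinuousOn u' (Set.Icc (0:ℝ) L) := hcd1u.continuousOn
  have hw'cont : ContinuousOn w' (Set.Icc (0:ℝ) L) := hcd1w.continuousOn
  have hit2 : ∀ (f : ℝ → ℝ), ∀ x ∈ Set.Icc (0:ℝ) L,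
      iteratedDerivWithin 2 f (Set.Icc 0 L) x
        = derivWithin (derivWithin f (Set.Icc 0 L)) (Set.Icc 0 L) x := by
    intro f x hx
    rw [show (2:ℕ) = 1 + 1 from rfl, iteratedDerivWithin_succ]
    exact derivWithin_congr (fun y hy => congrFun iteratedDerivWithin_one y)
      (congrFun iteratedDerivWithin_one x)
  have hdu : ∀ x ∈ Set.Icc (0:ℝ) L, HasDerivWithinAt u (u' x) (Set.Icc 0 L) x :=
    fun x hx => ((hu.differentiableOn (by norm_num)) x hx).hasDerivWithinAt
  have hdu' : ∀ x ∈ Set.Icc (0:ℝ) L, HasDerivWithinAt u' (u2 x) (Set.Icc 0 L) x := by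
    intro x hx
    rw [hu2def, hit2 u x hx]
    exact ((hcd1u.differentiableOn one_ne_zero) x hx).hasDerivWithinAt
  have hdw' : ∀ x ∈ Set.Icc (0:ℝ) L, HasDerivWithinAt w' (w2 x) (Set.Icc 0 L) x := by
    intro x hx
    rw [hw2def, hit2 w x hx]
    exact ((hcd1w.differentiableOn one_ne_zero) x hx).hasDerivWithinAt
  have hu2cont : ContinuousOn u2 (Set.Icc (0:ℝ) L) :=
    hu.continuousOn_iteratedDerivWithin (by norm_num) hsUD
  have hw2cont : ContinuousOn w2 (Set.Icc (0:ℝ) L) :=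
    hw.continuousOn_iteratedDerivWithin (by norm_num) hsUD
  have h0s : (0:ℝ) ∈ Set.Icc (0:ℝ) L := ⟨le_refl 0, hL.le⟩
  have hLs : L ∈ Set.Icc (0:ℝ) L := ⟨hL.le, le_refl L⟩
  have hftcu := ftc_icc hdu hu'cont
  have hftcu' := ftc_icc hdu' hu2cont
  have hftcw' := ftc_icc hdw' hw2cont
  -- continuity of composites
  have humem : ∀ x ∈ Set.Icc (0:ℝ) L, u x ∈ Set.Ici (0:ℝ) := fun x hx => (hupos x hx).le
  have hFu_cont : ContinuousOn (fun x => F (u x)) (Set.Icc (0:ℝ) L) :=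
    hF_smooth.continuousOn.comp hucont humem
  have hdu_cont : ContinuousOn (fun x => d (u x)) (Set.Icc (0:ℝ) L) :=
    hd_smooth.continuousOn.comp hucont humem
  have hdu_pos : ∀ x ∈ Set.Icc (0:ℝ) L, 0 < d (u x) := fun x hx => hd_pos _ (humem x hx)
  have hFu_pos : ∀ x ∈ Set.Icc (0:ℝ) L, 0 < F (u x) := by
    intro x hx
    have := hFmono (Set.mem_Ici.2 (le_refl 0)) (humem x hx) (hupos x hx)
    rwa [hF0] at this
  set p : ℝ → ℝ := fun x => F (u x) / d (u x) * w x with hpdef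
  set g : ℝ → ℝ := fun x => u x * (m x - u x) with hgdef
  have hpcont : ContinuousOn p (Set.Icc (0:ℝ) L) :=
    (hFu_cont.div hdu_cont (fun x hx => (hdu_pos x hx).ne')).mul hwcont
  have hgcont : ContinuousOn g (Set.Icc (0:ℝ) L) :=
    hucont.mul (hm_cont.sub hucont)
  have hppos : ∀ x ∈ Set.Icc (0:ℝ) L, 0 < p x := fun x hx =>
    mul_pos (div_pos (hFu_pos x hx) (hdu_pos x hx)) (hwpos x hx)
  -- Step 1: from the predator equation, θ ≤ α F(u x₀) somewhere
  obtain ⟨x₀, hx₀s, hx₀⟩ : ∃ x₀ ∈ Set.Icc (0:ℝ) L, θ ≤ α * F (u x₀) := by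
    by_contra hcon
    push_neg at hcon
    set Q : ℝ → ℝ := fun x => (α * F (u x) - θ) / d (u x) * w x with hQdef
    have hQcont : ContinuousOn Q (Set.Icc (0:ℝ) L) :=
      ((((hFu_cont.const_smul α).sub continuousOn_const).div hdu_cont
        (fun x hx => (hdu_pos x hx).ne')).mul hwcont)
    have hQint0 : ∫ x in (0:ℝ)..L, Q x = 0 := by
      have h1 : ∫ x in (0:ℝ)..L, Q x = ∫ x in (0:ℝ)..L, -μ * w2 x := by
        apply intervalIntegral.integral_congr
        intro x hx
        rw [hIcc_uIcc] at hx
        have h2 := heq2 x hx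
        simp only [hQdef]
        linarith
      rw [h1, intervalIntegral.integral_const_mul, hftcw' 0 h0s L hLs hL.le, hw0, hwL]
      ring
    have hQneg : ∀ x ∈ Set.Ioo (0:ℝ) L, 0 < -Q x := by
      intro x hx
      have hxs : x ∈ Set.Icc (0:ℝ) L := Set.Ioo_subset_Icc_self hx
      have h1 : (α * F (u x) - θ) / d (u x) < 0 :=
        div_neg_of_neg_of_pos (by linarith [hcon x hxs]) (hdu_pos x hxs)
      have h2 := mul_neg_of_neg_of_pos h1 (hwpos x hxs)
      simp only [hQdef]
      linarith
    have hpos := intervalIntegral.intervalIntegral_pos_of_pos_on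
      (hInt hQcont.neg) hQneg hL
    simp only [Pi.neg_apply] at hpos
    rw [intervalIntegral.integral_neg, hQint0] at hpos
    simp at hpos
  set s₀ : ℝ := u x₀ with hs₀def
  have hs₀pos : 0 < s₀ := hupos x₀ hx₀s
  have hs₀θ : θ / α ≤ F s₀ := (div_le_iff₀' hα).2 hx₀
  have hs₀mb : mb < s₀ := by
    by_contra h
    push_neg at h
    have : F s₀ ≤ F mb := by
      rcases eq_or_lt_of_le h with h' | h'
      · rw [h']
      · exact (hFmono hs₀pos.le hmbpos.le h').le
    have h7 := mul_le_mul_of_nonneg_left this hα.le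
    linarith
  -- Step 2: ∫ g = ∫ p, and 0 ≤ ∫ g
  have hgp : ∫ x in (0:ℝ)..L, g x = ∫ x in (0:ℝ)..L, p x := by
    have h1 : ∫ x in (0:ℝ)..L, (g x - p x) = ∫ x in (0:ℝ)..L, -ε * u2 x := by
      apply intervalIntegral.integral_congr
      intro x hx
      rw [hIcc_uIcc] at hx
      have h2 := heq1 x hx
      simp only [hgdef, hpdef]
      linarith
    rw [intervalIntegral.integral_sub (hInt hgcont) (hInt hpcont),
      intervalIntegral.integral_const_mul, hftcu' 0 h0s L hLs hL.le, hu0, huL] at h1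
    have : (-ε) * (0 - 0) = 0 := by ring
    rw [this] at h1
    linarith
  have hpnn : 0 ≤ ∫ x in (0:ℝ)..L, p x :=
    intervalIntegral.integral_nonneg hL.le (fun x hx => (hppos x hx).le)
  have hgnn : 0 ≤ ∫ x in (0:ℝ)..L, g x := hgp ▸ hpnn
  -- Step 3: gradient estimate
  have habsbd : ∀ x ∈ Set.Icc (0:ℝ) L, ε * |u2 x| ≤ M ^ 2 / 2 - g x + p x := by
    intro x hx
    have he := heq1 x hx
    have hgle : g x ≤ M ^ 2 / 4 :=
      arith_g_bound (u x) (m x) M (abs_le.1 (hmM x hx)).1 (abs_le.1 (hmM x hx)).2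
    have hple : 0 ≤ p x := (hppos x hx).le
    have heu : ε * u2 x = p x - g x := by
      simp only [hgdef, hpdef]
      linarith
    have habs : ε * |u2 x| = |p x - g x| := by
      rw [← abs_of_pos hε, ← abs_mul, heu]
    rw [habs, abs_le]
    have hM2 : (0:ℝ) ≤ M ^ 2 := sq_nonneg M
    constructor
    · linarith
    · linarith
  have hIu2 : ε * ∫ x in (0:ℝ)..L, |u2 x| ≤ L * M ^ 2 / 2 := by
    have h1 : ∫ x in (0:ℝ)..L, ε * |u2 x|
        ≤ ∫ x in (0:ℝ)..L, (M ^ 2 / 2 - g x + p x) :=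
      intervalIntegral.integral_mono_on hL.le
        ((hInt hu2cont.abs).const_mul ε)
        (((_root_.intervalIntegrable_const).sub (hInt hgcont)).add (hInt hpcont)) habsbd
    rw [intervalIntegral.integral_const_mul] at h1
    rw [intervalIntegral.integral_add ((_root_.intervalIntegrable_const).sub (hInt hgcont))
      (hInt hpcont), intervalIntegral.integral_sub _root_.intervalIntegrable_const (hInt hgcont),
      intervalIntegral.integral_const, smul_eq_mul, sub_zero, hgp] at h1
    linarith
  have hu'bd : ∀ x ∈ Set.Icc (0:ℝ) L, ε * |u' x| ≤ L * M ^ 2 / 2 := by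
    intro x hx
    have hxI := hftcu' 0 h0s x hx hx.1
    rw [hu0, sub_zero] at hxI
    have hint0x : IntervalIntegrable (fun y => |u2 y|) volume 0 x := by
      have : ContinuousOn (fun y => |u2 y|) (Set.uIcc (0:ℝ) x) := by
        rw [Set.uIcc_of_le hx.1]
        exact (hu2cont.abs).mono (Set.Icc_subset_Icc le_rfl hx.2)
      exact this.intervalIntegrable
    have hintxL : IntervalIntegrable (fun y => |u2 y|) volume x L := by
      have : ContinuousOn (fun y => |u2 y|) (Set.uIcc x L) := by
        rw [Set.uIcc_of_le hx.2]
        exact (hu2cont.abs).mono (Set.Icc_subset_Icc hx.1 le_rfl)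
      exact this.intervalIntegrable
    have hsplit := intervalIntegral.integral_add_adjacent_intervals hint0x hintxL
    have h4 : 0 ≤ ∫ y in x..L, |u2 y| :=
      intervalIntegral.integral_nonneg hx.2 (fun _ _ => abs_nonneg _)
    have h3 : |u' x| ≤ ∫ y in (0:ℝ)..L, |u2 y| := by
      rw [← hxI]
      calc |∫ y in (0:ℝ)..x, u2 y| ≤ ∫ y in (0:ℝ)..x, |u2 y| :=
            intervalIntegral.abs_integral_le_integral_abs hx.1
        _ ≤ ∫ y in (0:ℝ)..L, |u2 y| := by linarith
    calc ε * |u' x| ≤ ε * ∫ y in (0:ℝ)..L, |u2 y| :=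
          mul_le_mul_of_nonneg_left h3 hε.le
      _ ≤ L * M ^ 2 / 2 := hIu2
  -- Step 4: oscillation estimate
  have hosc : ∀ x ∈ Set.Icc (0:ℝ) L, ∀ y ∈ Set.Icc (0:ℝ) L, x ≤ y →
      |u y - u x| ≤ δ := by
    intro x hx y hy hxy
    have hxyI := hftcu x hx y hy hxy
    rw [← hxyI]
    have hintc : IntervalIntegrable u' volume x y := by
      have : ContinuousOn u' (Set.uIcc x y) := by
        rw [Set.uIcc_of_le hxy]
        exact hu'cont.mono (Set.Icc_subset_Icc hx.1 hy.2)
      exact this.intervalIntegrable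
    calc |∫ t in x..y, u' t| ≤ ∫ t in x..y, |u' t| :=
          intervalIntegral.abs_integral_le_integral_abs hxy
      _ ≤ ∫ _t in x..y, L * M ^ 2 / (2 * ε) := by
          apply intervalIntegral.integral_mono_on hxy hintc.abs _root_.intervalIntegrable_const
          intro t ht
          have hts : t ∈ Set.Icc (0:ℝ) L := ⟨hx.1.trans ht.1, ht.2.trans hy.2⟩
          have := hu'bd t hts
          rw [le_div_iff₀ (by positivity : (0:ℝ) < 2 * ε)]
          linarith
      _ = (y - x) * (L * M ^ 2 / (2 * ε)) := by
          rw [intervalIntegral.integral_const, smul_eq_mul]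
      _ ≤ δ := by
          rw [hδdef]
          exact arith_osc L M ε y x hL hε (by linarith [hy.2, hx.1]) (by linarith)
  -- Step 5: maximum of u and lower bound
  obtain ⟨xb, hxbs, hxbmax⟩ := isCompact_Icc.exists_isMaxOn
    (Set.nonempty_Icc.2 hL.le) hucont
  set b : ℝ := u xb with hbdef
  have hub : ∀ x ∈ Set.Icc (0:ℝ) L, u x ≤ b := fun x hx => hxbmax hx
  have hlb : ∀ x ∈ Set.Icc (0:ℝ) L, b - δ ≤ u x := by
    intro x hx
    rcases le_total x xb with h | h
    · have := hosc x hx xb hxbs h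
      have := (abs_le.1 this).2
      linarith
    · have := hosc xb hxbs x hx h
      have := (abs_le.1 this).1
      linarith
  have hs₀b : s₀ ≤ b := hub x₀ hx₀s
  have hbmb : mb < b := lt_of_lt_of_le hs₀mb hs₀b
  have hδmb : δ < mb := lt_of_le_of_lt (hδδ₀.trans hδ₀mb) (by linarith)
  have hbδpos : 0 < b - δ := by linarith
  -- Step 6: integral inequality gives (b-δ)² ≤ b·mb + δ·M
  have hptwise : ∀ x ∈ Set.Icc (0:ℝ) L,
      g x ≤ b * m x + (δ * M - (b - δ) ^ 2) := by
    intro x hx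
    have h1 := hub x hx
    have h2 := hlb x hx
    have h3 := (abs_le.1 (hmM x hx)).1
    have h4 := (abs_le.1 (hmM x hx)).2
    simp only [hgdef]
    exact arith_ptwise (u x) (m x) M b δ h1 h2 h3 h4 hbδpos.le hM0.le
  have hkey : (b - δ) ^ 2 ≤ b * mb + δ * M := by
    have h1 : ∫ x in (0:ℝ)..L, g x
        ≤ ∫ x in (0:ℝ)..L, (b * m x + (δ * M - (b - δ) ^ 2)) :=
      intervalIntegral.integral_mono_on hL.le (hInt hgcont)
        (((hInt hm_cont).const_mul b).add _root_.intervalIntegrable_const) hptwise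
    rw [intervalIntegral.integral_add ((hInt hm_cont).const_mul b)
      _root_.intervalIntegrable_const, intervalIntegral.integral_const_mul, hintm,
      intervalIntegral.integral_const, smul_eq_mul, sub_zero] at h1
    have h2 : 0 ≤ b * (L * mb) + L * (δ * M - (b - δ) ^ 2) := le_trans hgnn h1
    exact arith_key L b mb δ M hL h2
  -- Step 7: b ≤ 4M
  have hb4M : b ≤ 4 * M := by
    have hδM : δ ≤ M := by
      have := hδδ₀.trans hδ₀mb
      linarith [hmbM]
    exact arith_b4M b mb δ M hkey hmbM hδM hδpos.le hM1 (lt_trans hmbpos hbmb)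
  -- Step 8: b - mb ≤ 9 M δ / mb ≤ ρ, so s₀ ≤ mb + ρ
  have hbmbρ : b - mb ≤ ρ :=
    arith_bmb b mb δ M ρ δ₀ hkey hb4M hmbpos hbmb hδpos hδδ₀ h9 hM0
  have hs₀ρ : |s₀ - mb| ≤ ρ := by
    rw [abs_le]
    constructor
    · linarith
    · linarith [hs₀b]
  have hcontr := hρ s₀ hs₀pos.le hs₀ρ
  linarith
end
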